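/- arXiv:1505.03623 — 6 statements merged into one kernel-verified Lean document; each statement's English description precedes it below -/
import Mathlib

section
/- If F is an integral domain of characteristic zero, A ∈ M(p',p;F), B ∈ M(q',q;F), then A ⊙ B = 0 if and only if A = 0 or B = 0. -/
open Finset

variable {F : Type*}

/-- The weight `|α| = α₁ + ⋯ + αₙ` of a multi-index. -/
def wt {n : ℕ} (α : Fin n → ℕ) : ℕ := ∑ i, α i

/-- The multi-index binomial coefficient `C(α, β) = α!/(β!(α-β)!)`. -/
def mchoose {n : ℕ} (α β : Fin n → ℕ) : ℕ := ∏ i, (α i).choose (β i)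

/-- The symmetric product `A ⊙ B` of a matrix `A ∈ M(p',p;F)` with a matrix `B`:
`(A⊙B)^{α'}_α = Σ_{β'≤α', β≤α, |β'|=p', |β|=p} C(α,β) A^{β'}_β B^{α'-β'}_{α-β}`. -/
def symProd {n' n : ℕ} [CommRing F] (p' p : ℕ)
    (A B : (Fin n' → ℕ) → (Fin n → ℕ) → F) :
    (Fin n' → ℕ) → (Fin n → ℕ) → F :=
  fun α' α => ∑ β' ∈ Finset.Iic α', ∑ β ∈ Finset.Iic α,
    if wt β' = p' ∧ wt β = p then
      (mchoose α β : F) * A β' β * B (α' - β') (α - β)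
    else 0

/-- `A ∈ M(p',p;F)`: all entries of `A` off weight `(p',p)` vanish. -/
def IsHomog {n' n : ℕ} [CommRing F] (p' p : ℕ)
    (A : (Fin n' → ℕ) → (Fin n → ℕ) → F) : Prop :=
  ∀ α' α, (wt α' ≠ p' ∨ wt α ≠ p) → A α' α = 0

instance {γ : Type*} [Finite γ] : Finite (Lex γ) := ‹Finite γ›

/-- An injective additive embedding of pairs of multi-indices into a
well-ordered linearly ordered cancellative monoid. -/
noncomputable def emb {n' n : ℕ} (x : (Fin n' → ℕ) × (Fin n → ℕ)) :
    Lex ((Fin n' ⊕ₗ Fin n) →₀ ℕ) :=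
  toLex (Finsupp.equivFunOnFinite.symm (fun i => Sum.elim x.1 x.2 (ofLex i)))

lemma emb_add {n' n : ℕ} (x y : (Fin n' → ℕ) × (Fin n → ℕ)) :
    emb (x + y) = emb x + emb y := by
  unfold emb
  rw [← toLex_add]
  congr 1
  ext i
  rcases i with i | i <;> rfl

lemma emb_injective {n' n : ℕ} : Function.Injective (emb (n' := n') (n := n)) := by
  intro x y h
  unfold emb at h
  have h3 := Finsupp.equivFunOnFinite.symm.injective (toLex.injective h)
  ext i
  · exact congrFun h3 (toLex (Sum.inl i))
  · exact congrFun h3 (toLex (Sum.inr i))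

lemma min_split {M : Type*} [AddCommMonoid M] [PartialOrder M] [IsOrderedCancelAddMonoid M] {a b x y : M}
    (hx : a ≤ x) (hy : b ≤ y) (hsum : x + y = a + b) : x = a ∧ y = b := by
  have h1 : a + b ≤ x + b := add_le_add_left hx b
  have h2 : x + b ≤ x + y := add_le_add_right hy x
  have hxb : x + b = a + b := le_antisymm (hsum ▸ h2) h1
  have hxa : x = a := add_right_cancel hxb
  refine ⟨hxa, ?_⟩
  rw [hxa] at hsum
  exact add_left_cancel hsum

/-- Over an integral domain of characteristic zero, `A ⊙ B = 0` iff `A = 0` or `B = 0`,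
for `A ∈ M(p',p;F)` and `B ∈ M(q',q;F)`. -/
theorem symProd_eq_zero_iff {n' n : ℕ} [CommRing F] [IsDomain F] [CharZero F]
    (p' p q' q : ℕ)
    (A B : (Fin n' → ℕ) → (Fin n → ℕ) → F)
    (hA : IsHomog p' p A) (hB : IsHomog q' q B) :
    symProd p' p A B = 0 ↔ A = 0 ∨ B = 0 := by
  constructor
  · intro h
    by_contra hc
    push_neg at hc
    obtain ⟨hA0, hB0⟩ := hc
    have hxA : ∃ x : (Fin n' → ℕ) × (Fin n → ℕ), A x.1 x.2 ≠ 0 := by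
      by_contra hx
      push_neg at hx
      exact hA0 (funext fun u => funext fun v => hx (u, v))
    have hxB : ∃ x : (Fin n' → ℕ) × (Fin n → ℕ), B x.1 x.2 ≠ 0 := by
      by_contra hx
      push_neg at hx
      exact hB0 (funext fun u => funext fun v => hx (u, v))
    obtain ⟨x₀, hx₀⟩ := hxA
    obtain ⟨y₀, hy₀⟩ := hxB
    haveI : WellFoundedLT (Lex ((Fin n' ⊕ₗ Fin n) →₀ ℕ)) :=
      Finsupp.Lex.wellFoundedLT_of_finite
    obtain ⟨_, ⟨a, ha, rfl⟩, haminr⟩ :=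
      (wellFounded_lt (α := Lex ((Fin n' ⊕ₗ Fin n) →₀ ℕ))).has_min
        (emb '' {x | A x.1 x.2 ≠ 0}) ⟨emb x₀, x₀, hx₀, rfl⟩
    obtain ⟨_, ⟨b, hb, rfl⟩, hbminr⟩ :=
      (wellFounded_lt (α := Lex ((Fin n' ⊕ₗ Fin n) →₀ ℕ))).has_min
        (emb '' {x | B x.1 x.2 ≠ 0}) ⟨emb y₀, y₀, hy₀, rfl⟩
    have hamin : ∀ z : (Fin n' → ℕ) × (Fin n → ℕ), A z.1 z.2 ≠ 0 → emb a ≤ emb z :=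
      fun z hz => not_lt.1 (haminr _ ⟨z, hz, rfl⟩)
    have hbmin : ∀ z : (Fin n' → ℕ) × (Fin n → ℕ), B z.1 z.2 ≠ 0 → emb b ≤ emb z :=
      fun z hz => not_lt.1 (hbminr _ ⟨z, hz, rfl⟩)
    have ha' : A a.1 a.2 ≠ 0 := ha
    have hb' : B b.1 b.2 ≠ 0 := hb
    have hkey := congrFun (congrFun h (a.1 + b.1)) (a.2 + b.2)
    simp only [Pi.zero_apply] at hkey
    rw [symProd] at hkey
    rw [← Finset.sum_product'] at hkey
    have hmem : a ∈ Finset.Iic (a.1 + b.1) ×ˢ Finset.Iic (a.2 + b.2) := by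
      rw [Finset.mem_product, Finset.mem_Iic, Finset.mem_Iic]
      exact ⟨le_add_of_nonneg_right zero_le, le_add_of_nonneg_right zero_le⟩
    have hzero : ∀ z ∈ Finset.Iic (a.1 + b.1) ×ˢ Finset.Iic (a.2 + b.2), z ≠ a →
        (if wt z.1 = p' ∧ wt z.2 = p then
          (mchoose (a.2 + b.2) z.2 : F) * A z.1 z.2 * B (a.1 + b.1 - z.1) (a.2 + b.2 - z.2)
        else 0) = 0 := by
      intro z hz hza
      split_ifs with hw
      · by_contra hne
        have hAz : A z.1 z.2 ≠ 0 := by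
          intro h0; exact hne (by rw [h0]; ring)
        have hBz : B (a.1 + b.1 - z.1) (a.2 + b.2 - z.2) ≠ 0 := by
          intro h0; exact hne (by rw [h0]; ring)
        rw [Finset.mem_product, Finset.mem_Iic, Finset.mem_Iic] at hz
        set w : (Fin n' → ℕ) × (Fin n → ℕ) := (a.1 + b.1 - z.1, a.2 + b.2 - z.2) with hw'
        have hzw : z + w = a + b := by
          refine Prod.ext ?_ ?_
          · show z.1 + (a.1 + b.1 - z.1) = a.1 + b.1
            funext i
            exact Nat.add_sub_cancel' (hz.1 i)
          · show z.2 + (a.2 + b.2 - z.2) = a.2 + b.2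
            funext i
            exact Nat.add_sub_cancel' (hz.2 i)
        have he : emb z + emb w = emb a + emb b := by
          rw [← emb_add, ← emb_add, hzw]
        obtain ⟨hez, _⟩ := min_split (hamin z hAz) (hbmin w hBz) he
        exact hza (emb_injective hez)
      · rfl
    rw [Finset.sum_eq_single_of_mem a hmem hzero] at hkey
    have hwa : wt a.1 = p' ∧ wt a.2 = p := by
      by_contra hw
      exact ha' (hA _ _ (not_and_or.mp hw))
    rw [if_pos hwa] at hkey
    have e1 : a.1 + b.1 - a.1 = b.1 := by
      funext i
      show a.1 i + b.1 i - a.1 i = b.1 i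
      exact Nat.add_sub_cancel_left _ _
    have e2 : a.2 + b.2 - a.2 = b.2 := by
      funext i
      show a.2 i + b.2 i - a.2 i = b.2 i
      exact Nat.add_sub_cancel_left _ _
    rw [e1, e2] at hkey
    have hcpos : 0 < mchoose (a.2 + b.2) a.2 :=
      Finset.prod_pos fun i _ => Nat.choose_pos (Nat.le_add_right _ _)
    have hcne : (mchoose (a.2 + b.2) a.2 : F) ≠ 0 := Nat.cast_ne_zero.mpr hcpos.ne'
    rcases mul_eq_zero.mp hkey with h1 | h1
    · rcases mul_eq_zero.mp h1 with h2 | h2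
      · exact hcne h2
      · exact ha' h2
    · exact hb' h1
  · rintro (rfl | rfl) <;> funext α' α <;> simp [symProd]
end

section
/- For a row vector r ∈ M(0,1;F) (indexed by I_n) and a matrix h ∈ M(1,k;F), and any natural number m, one has (rh)^{⊙m} = (r^{⊙m}/m!) · h^{⊙m}, where the product on the right is ordinary matrix multiplication. -/
open Finset

variable {F : Type*}

/-- The `m`-th symmetric power `A^{⊙m}` of `A ∈ M(p',p;F)`; `A^{⊙0}` is the
scalar identity `1 ∈ M(0,0;F)`. -/
def symPow {n' n : ℕ} [CommRing F] (p' p : ℕ)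
    (A : (Fin n' → ℕ) → (Fin n → ℕ) → F) :
    ℕ → (Fin n' → ℕ) → (Fin n → ℕ) → F
  | 0 => fun α' α => if α' = 0 ∧ α = 0 then 1 else 0
  | (m + 1) => symProd (m * p') (m * p) (symPow p' p A m) A

/-- The row vector `r = (r₁,…,rₙ) ∈ M(0,1;F)`. -/
def rowOf {n : ℕ} [CommRing F] (r : Fin n → F) :
    (Fin 0 → ℕ) → (Fin n → ℕ) → F :=
  fun _ α => ∑ i, if α = Pi.single i 1 then r i else 0

/-- The finite set of multi-indices in `I_n` of weight `w`. -/
def wtSet (n w : ℕ) : Finset (Fin n → ℕ) :=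
  (Finset.Iic (fun _ => w : Fin n → ℕ)).filter (fun β => wt β = w)

/-- Ordinary matrix multiplication of multi-index matrices, with middle index
running over the multi-indices of weight `w`. -/
def matMul {n' n'' n : ℕ} [CommRing F] (w : ℕ)
    (A : (Fin n' → ℕ) → (Fin n'' → ℕ) → F)
    (B : (Fin n'' → ℕ) → (Fin n → ℕ) → F) :
    (Fin n' → ℕ) → (Fin n → ℕ) → F :=
  fun α' α => ∑ β ∈ wtSet n'' w, A α' β * B β α

section Aux

lemma fin0_eq (x y : Fin 0 → ℕ) : x = y := funext fun i => i.elim0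

lemma wt_fin0 (x : Fin 0 → ℕ) : wt x = 0 := by simp [wt]

lemma Iic_fin0 (o : Fin 0 → ℕ) : Finset.Iic o = {o} := by
  ext x
  simp only [Finset.mem_Iic, Finset.mem_singleton]
  exact ⟨fun _ => fin0_eq x o, fun h => le_of_eq h⟩

lemma wt_zero' {n : ℕ} : wt (0 : Fin n → ℕ) = 0 := by simp [wt]

lemma wt_add {n : ℕ} (a b : Fin n → ℕ) : wt (a + b) = wt a + wt b := by
  simp [wt, Finset.sum_add_distrib]

lemma wt_eq_zero_iff {n : ℕ} {a : Fin n → ℕ} : wt a = 0 ↔ a = 0 := by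
  constructor
  · intro h
    funext i
    have := Finset.sum_eq_zero_iff.mp h i (Finset.mem_univ i)
    simpa using this
  · rintro rfl; exact wt_zero'

lemma pi_add_sub {n : ℕ} {γ δ : Fin n → ℕ} (h : γ ≤ δ) : γ + (δ - γ) = δ := by
  funext i
  have := Pi.le_def.mp h i
  simp only [Pi.add_apply, Pi.sub_apply]
  omega

lemma pi_add_sub_cancel {n : ℕ} (γ ε : Fin n → ℕ) : γ + ε - γ = ε := by
  funext i
  simp only [Pi.add_apply, Pi.sub_apply]
  omega

lemma wt_single {n : ℕ} (i : Fin n) : wt (Pi.single i 1 : Fin n → ℕ) = 1 := by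
  simp [wt]

lemma mem_wtSet {n w : ℕ} {γ : Fin n → ℕ} : γ ∈ wtSet n w ↔ wt γ = w := by
  simp only [wtSet, Finset.mem_filter, Finset.mem_Iic]
  constructor
  · exact fun h => h.2
  · intro h
    refine ⟨Pi.le_def.mpr fun i => ?_, h⟩
    calc γ i ≤ wt γ := Finset.single_le_sum (f := fun j => γ j) (fun _ _ => Nat.zero_le _) (Finset.mem_univ i)
    _ = w := h

lemma wtSet_zero {n : ℕ} : wtSet n 0 = {0} := by
  ext γ
  rw [mem_wtSet, Finset.mem_singleton, wt_eq_zero_iff]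

def mpow {F : Type*} {n : ℕ} [CommRing F] (r : Fin n → F) (γ : Fin n → ℕ) : F := ∏ i, r i ^ γ i

lemma mpow_zero {F : Type*} {n : ℕ} [CommRing F] (r : Fin n → F) : mpow r 0 = 1 := by simp [mpow]

lemma mpow_add {F : Type*} {n : ℕ} [CommRing F] (r : Fin n → F) (a b : Fin n → ℕ) :
    mpow r (a + b) = mpow r a * mpow r b := by
  simp [mpow, pow_add, Finset.prod_mul_distrib]

lemma mpow_single {F : Type*} {n : ℕ} [CommRing F] (r : Fin n → F) (i : Fin n) :
    mpow r (Pi.single i 1) = r i := by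
  unfold mpow
  rw [Finset.prod_eq_single i]
  · simp
  · intro j _ hj
    rw [Pi.single_eq_of_ne hj, pow_zero]
  · simp

lemma eq_single_of_wt_one {n : ℕ} {ε : Fin n → ℕ} (h : wt ε = 1) :
    ∃ i, ε = Pi.single i 1 := by
  obtain ⟨i, -, hi⟩ : ∃ i ∈ Finset.univ, ε i ≠ 0 := by
    by_contra hc
    push_neg at hc
    have : wt ε = 0 := Finset.sum_eq_zero fun j hj => hc j hj
    omega
  have hle : ε i ≤ wt ε :=
    Finset.single_le_sum (f := fun j => ε j) (fun _ _ => Nat.zero_le _) (Finset.mem_univ i)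
  have hεi : ε i = 1 := by omega
  refine ⟨i, funext fun j => ?_⟩
  rcases eq_or_ne j i with rfl | hj
  · simpa using hεi
  · have h2 : ∑ l ∈ Finset.univ.erase i, ε l = 0 := by
      have h3 := Finset.add_sum_erase Finset.univ ε (Finset.mem_univ i)
      unfold wt at h
      omega
    have : ε j = 0 :=
      Finset.sum_eq_zero_iff.mp h2 j (Finset.mem_erase.mpr ⟨hj, Finset.mem_univ j⟩)
    rw [this, Pi.single_eq_of_ne hj]

lemma rowOf_single {F : Type*} {n : ℕ} [CommRing F] (r : Fin n → F) (x : Fin 0 → ℕ) (i : Fin n) :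
    rowOf r x (Pi.single i 1) = r i := by
  unfold rowOf
  rw [Finset.sum_eq_single i]
  · simp
  · intro j _ hj
    rw [if_neg]
    intro hc
    have := congrFun hc i
    rw [Pi.single_eq_same, Pi.single_eq_of_ne (Ne.symm hj)] at this
    exact one_ne_zero this
  · simp

lemma rowOf_wt_one {F : Type*} {n : ℕ} [CommRing F] (r : Fin n → F) (x : Fin 0 → ℕ)
    {ε : Fin n → ℕ} (h : wt ε = 1) : rowOf r x ε = mpow r ε := by
  obtain ⟨i, rfl⟩ := eq_single_of_wt_one h
  rw [rowOf_single, mpow_single]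

lemma rowOf_eq_zero {F : Type*} {n : ℕ} [CommRing F] (r : Fin n → F) (x : Fin 0 → ℕ)
    {ε : Fin n → ℕ} (h : wt ε ≠ 1) : rowOf r x ε = 0 := by
  unfold rowOf
  refine Finset.sum_eq_zero fun i _ => ?_
  rw [if_neg]
  intro hc
  exact h (hc ▸ wt_single i)

lemma mchoose_add_single {n : ℕ} (β : Fin n → ℕ) (i : Fin n) :
    mchoose (β + Pi.single i 1) β = β i + 1 := by
  unfold mchoose
  rw [Finset.prod_eq_single i]
  · simp [Nat.choose_succ_self_right]
  · intro j _ hj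
    simp [Pi.single_eq_of_ne hj]
  · simp

end Aux

lemma pi_add_sub_cancel_right {n : ℕ} (γ ε : Fin n → ℕ) : γ + ε - ε = γ := by
  funext i
  simp only [Pi.add_apply, Pi.sub_apply]
  omega
lemma symPow_rowOf {F : Type*} {n : ℕ} [Field F] (r : Fin n → F) (m : ℕ) (o : Fin 0 → ℕ)
    (γ : Fin n → ℕ) :
    symPow 0 1 (rowOf r) m o γ =
      if wt γ = m then (m.factorial : F) * mpow r γ else 0 := by
  induction m generalizing γ with
  | zero =>
    have ho : o = 0 := fin0_eq o 0
    subst ho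
    by_cases hγ : γ = 0
    · subst hγ
      simp [symPow, wt_zero', mpow_zero]
    · have : wt γ ≠ 0 := fun h => hγ (wt_eq_zero_iff.mp h)
      simp [symPow, hγ, this]
  | succ m ih =>
    simp only [symPow, symProd, Nat.mul_zero, Nat.mul_one]
    rw [Iic_fin0, Finset.sum_singleton]
    simp only [wt_fin0, eq_self_iff_true, true_and]
    by_cases hγ : wt γ = m + 1
    · rw [if_pos hγ]
      have step1 : ∀ β ∈ Finset.Iic γ,
          (if wt β = m then
            (mchoose γ β : F) * symPow 0 1 (rowOf r) m o β * rowOf r (o - o) (γ - β)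
          else 0)
          = ∑ i, if γ = β + Pi.single i 1 then
              (mchoose γ β : F) * ((m.factorial : F) * mpow r β) * r i else 0 := by
        intro β hβ
        have hβle : β ≤ γ := Finset.mem_Iic.mp hβ
        by_cases hβm : wt β = m
        · rw [if_pos hβm, ih, if_pos hβm]
          unfold rowOf
          rw [Finset.mul_sum]
          refine Finset.sum_congr rfl fun i _ => ?_
          rw [mul_ite, mul_zero]
          congr 1
          exact propext ⟨fun hsub => by rw [← pi_add_sub hβle, hsub],
            fun hadd => by rw [hadd, pi_add_sub_cancel]⟩
        · rw [if_neg hβm]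
          symm
          refine Finset.sum_eq_zero fun i _ => ?_
          rw [if_neg]
          intro hadd
          apply hβm
          have := wt_add β (Pi.single i 1)
          rw [← hadd, wt_single] at this
          omega
      rw [Finset.sum_congr rfl step1, Finset.sum_comm]
      have step3 : ∀ i : Fin n,
          (∑ β ∈ Finset.Iic γ, if γ = β + Pi.single i 1 then
            (mchoose γ β : F) * ((m.factorial : F) * mpow r β) * r i else 0)
          = (γ i : F) * ((m.factorial : F) * mpow r γ) := by
        intro i
        by_cases hi : γ i = 0
        · rw [hi, Nat.cast_zero, zero_mul]
          refine Finset.sum_eq_zero fun β _ => ?_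
          rw [if_neg]
          intro hadd
          have := congrFun hadd i
          simp [hi] at this
        · set β₀ : Fin n → ℕ := γ - Pi.single i 1 with hβ₀
          have hγ0 : γ = β₀ + Pi.single i 1 := by
            funext j
            rcases eq_or_ne j i with rfl | hj
            · simp only [hβ₀, Pi.add_apply, Pi.sub_apply, Pi.single_eq_same]
              omega
            · simp only [hβ₀, Pi.add_apply, Pi.sub_apply, Pi.single_eq_of_ne hj]
              omega
          rw [Finset.sum_eq_single_of_mem β₀]
          · rw [if_pos hγ0]
            have h1 : mchoose γ β₀ = γ i := by
              conv_lhs => rw [hγ0]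
              rw [mchoose_add_single]
              simp only [hβ₀, Pi.sub_apply, Pi.single_eq_same]
              omega
            have h2 : mpow r β₀ * r i = mpow r γ := by
              conv_rhs => rw [hγ0]
              rw [mpow_add, mpow_single]
            rw [h1, ← h2]
            ring
          · rw [Finset.mem_Iic]
            exact Pi.le_def.mpr fun j => Nat.sub_le _ _
          · intro β hβ hne
            rw [if_neg]
            intro hadd
            apply hne
            rw [hβ₀, hadd, pi_add_sub_cancel_right]
      rw [Finset.sum_congr rfl fun i _ => step3 i, ← Finset.sum_mul, ← Nat.cast_sum]
      have : ∑ i, γ i = wt γ := rfl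
      rw [this, hγ]
      push_cast [Nat.factorial_succ]
      ring
    · rw [if_neg hγ]
      refine Finset.sum_eq_zero fun β hβ => ?_
      have hβle : β ≤ γ := Finset.mem_Iic.mp hβ
      by_cases hβm : wt β = m
      · rw [if_pos hβm]
        have hw : wt (γ - β) ≠ 1 := by
          intro hw1
          apply hγ
          have := wt_add β (γ - β)
          rw [pi_add_sub hβle, hw1] at this
          omega
        rw [rowOf_eq_zero r _ hw, mul_zero]
      · rw [if_neg hβm]
lemma pair_reindex {n a b : ℕ} {M : Type*} [AddCommMonoid M]
    (f : (Fin n → ℕ) → (Fin n → ℕ) → M) :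
    ∑ δ ∈ wtSet n (a + b), ∑ γ ∈ (Finset.Iic δ).filter (fun γ => wt γ = a), f γ (δ - γ)
      = ∑ γ ∈ wtSet n a, ∑ ε ∈ wtSet n b, f γ ε := by
  rw [Finset.sum_sigma', Finset.sum_sigma']
  refine Finset.sum_bij'
    (fun p _ => (⟨p.2, p.1 - p.2⟩ : Σ _ : Fin n → ℕ, Fin n → ℕ))
    (fun q _ => (⟨q.1 + q.2, q.1⟩ : Σ _ : Fin n → ℕ, Fin n → ℕ))
    ?_ ?_ ?_ ?_ ?_
  · rintro ⟨δ, γ⟩ hp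
    simp only [Finset.mem_sigma, mem_wtSet, Finset.mem_filter, Finset.mem_Iic] at hp ⊢
    obtain ⟨hδ, hγle, hγ⟩ := hp
    refine ⟨hγ, ?_⟩
    have := wt_add γ (δ - γ)
    rw [pi_add_sub hγle] at this
    omega
  · rintro ⟨γ, ε⟩ hq
    simp only [Finset.mem_sigma, mem_wtSet, Finset.mem_filter, Finset.mem_Iic] at hq ⊢
    obtain ⟨hγ, hε⟩ := hq
    refine ⟨by rw [wt_add]; omega, ?_, hγ⟩
    exact Pi.le_def.mpr fun i => by simp [Pi.add_apply]
  · rintro ⟨δ, γ⟩ hp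
    simp only [Finset.mem_sigma, mem_wtSet, Finset.mem_filter, Finset.mem_Iic] at hp
    obtain ⟨hδ, hγle, hγ⟩ := hp
    simp only [Sigma.mk.inj_iff]
    exact ⟨pi_add_sub hγle, heq_of_eq rfl⟩
  · rintro ⟨γ, ε⟩ hq
    simp only [Sigma.mk.inj_iff]
    exact ⟨trivial, heq_of_eq (pi_add_sub_cancel γ ε)⟩
  · rintro ⟨δ, γ⟩ hp
    rfl
lemma symPow_matMul {F : Type*} {n : ℕ} [Field F] (r : Fin n → F) (k : ℕ)
    (h : (Fin n → ℕ) → (Fin n → ℕ) → F) (m : ℕ) (o : Fin 0 → ℕ) (α : Fin n → ℕ) :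
    symPow 0 k (matMul 1 (rowOf r) h) m o α =
      ∑ γ ∈ wtSet n m, mpow r γ * symPow 1 k h m γ α := by
  induction m generalizing α with
  | zero =>
    have ho : o = 0 := fin0_eq o 0
    subst ho
    rw [wtSet_zero, Finset.sum_singleton]
    simp [symPow, mpow_zero]
  | succ m ih =>
    have stepA : ∀ δ ∈ wtSet n (m + 1),
        mpow r δ * symPow 1 k h (m + 1) δ α
          = ∑ γ ∈ (Finset.Iic δ).filter (fun γ => wt γ = m),
              (mpow r γ * mpow r (δ - γ) *
                ∑ β ∈ Finset.Iic α, (if wt β = m * k then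
                  (mchoose α β : F) * symPow 1 k h m γ β * h (δ - γ) (α - β) else 0)) := by
      intro δ hδ
      simp only [symPow, symProd, Nat.mul_one]
      rw [Finset.mul_sum, Finset.sum_filter]
      refine Finset.sum_congr rfl fun γ hγle => ?_
      by_cases hγ : wt γ = m
      · rw [if_pos hγ]
        simp only [hγ, eq_self_iff_true, true_and]
        have hsplit : γ + (δ - γ) = δ := pi_add_sub (Finset.mem_Iic.mp hγle)
        conv_lhs => rw [← hsplit, mpow_add]
        rw [pi_add_sub_cancel]
      · rw [if_neg hγ]
        simp [hγ]
    have stepC : symPow 0 k (matMul 1 (rowOf r) h) (m + 1) o α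
        = ∑ γ ∈ wtSet n m, ∑ ε ∈ wtSet n 1,
            (mpow r γ * mpow r ε *
              ∑ β ∈ Finset.Iic α, (if wt β = m * k then
                (mchoose α β : F) * symPow 1 k h m γ β * h ε (α - β) else 0)) := by
      simp only [symPow, symProd, Nat.mul_zero]
      rw [Iic_fin0, Finset.sum_singleton]
      simp only [wt_fin0, eq_self_iff_true, true_and]
      have stepC1 : ∀ β ∈ Finset.Iic α,
          (if wt β = m * k then
            (mchoose α β : F) * symPow 0 k (matMul 1 (rowOf r) h) m o β *
              matMul 1 (rowOf r) h (o - o) (α - β) else 0)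
          = ∑ γ ∈ wtSet n m, ∑ ε ∈ wtSet n 1, (if wt β = m * k then
              mpow r γ * mpow r ε *
                ((mchoose α β : F) * symPow 1 k h m γ β * h ε (α - β)) else 0) := by
        intro β _
        by_cases hP : wt β = m * k
        · rw [if_pos hP, ih]
          have hX : matMul 1 (rowOf r) h (o - o) (α - β)
              = ∑ ε ∈ wtSet n 1, mpow r ε * h ε (α - β) := by
            refine Finset.sum_congr rfl fun ε hε => ?_
            rw [rowOf_wt_one r _ (mem_wtSet.mp hε)]
          rw [hX]
          simp only [hP, eq_self_iff_true, if_true]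
          rw [mul_assoc, Finset.sum_mul_sum, Finset.mul_sum]
          refine Finset.sum_congr rfl fun γ _ => ?_
          rw [Finset.mul_sum]
          refine Finset.sum_congr rfl fun ε _ => ?_
          ring
        · rw [if_neg hP]
          symm
          exact Finset.sum_eq_zero fun γ _ => Finset.sum_eq_zero fun ε _ => if_neg hP
      rw [Finset.sum_congr rfl stepC1, Finset.sum_comm]
      refine Finset.sum_congr rfl fun γ _ => ?_
      rw [Finset.sum_comm]
      refine Finset.sum_congr rfl fun ε _ => ?_
      rw [Finset.mul_sum]
      refine Finset.sum_congr rfl fun β _ => ?_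
      split_ifs with hb
      · rfl
      · rw [mul_zero]
    calc symPow 0 k (matMul 1 (rowOf r) h) (m + 1) o α
        = ∑ γ ∈ wtSet n m, ∑ ε ∈ wtSet n 1,
            (mpow r γ * mpow r ε *
              ∑ β ∈ Finset.Iic α, (if wt β = m * k then
                (mchoose α β : F) * symPow 1 k h m γ β * h ε (α - β) else 0)) := stepC
      _ = ∑ δ ∈ wtSet n (m + 1), ∑ γ ∈ (Finset.Iic δ).filter (fun γ => wt γ = m),
            (mpow r γ * mpow r (δ - γ) *
              ∑ β ∈ Finset.Iic α, (if wt β = m * k then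
                (mchoose α β : F) * symPow 1 k h m γ β * h (δ - γ) (α - β) else 0)) :=
          (pair_reindex (fun γ ε => mpow r γ * mpow r ε *
            ∑ β ∈ Finset.Iic α, (if wt β = m * k then
              (mchoose α β : F) * symPow 1 k h m γ β * h ε (α - β) else 0))).symm
      _ = ∑ δ ∈ wtSet n (m + 1), mpow r δ * symPow 1 k h (m + 1) δ α :=
          Finset.sum_congr rfl fun δ hδ => (stepA δ hδ).symm
/-- For a row vector `r ∈ M(0,1;F)` and a matrix `h ∈ M(1,k;F)`,
`(rh)^{⊙m} = (r^{⊙m}/m!) · h^{⊙m}`, the product on the right being ordinary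
matrix multiplication. -/
theorem symPow_row_mul {n : ℕ} {F : Type*} [Field F] [CharZero F]
    (r : Fin n → F) (k : ℕ) (h : (Fin n → ℕ) → (Fin n → ℕ) → F)
    (hh : IsHomog 1 k h) (m : ℕ) :
    symPow 0 k (matMul 1 (rowOf r) h) m =
      matMul m (fun o β => (m.factorial : F)⁻¹ * symPow 0 1 (rowOf r) m o β)
        (symPow 1 k h m) := by
  funext o α
  rw [symPow_matMul r k h m o α]
  unfold matMul
  refine Finset.sum_congr rfl fun γ hγ => ?_
  show _ = (↑m.factorial)⁻¹ * symPow 0 1 (rowOf r) m o γ * symPow 1 k h m γ α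
  rw [symPow_rowOf, if_pos (mem_wtSet.mp hγ)]
  have hfac : (m.factorial : F) ≠ 0 := Nat.cast_ne_zero.mpr (Nat.factorial_ne_zero m)
  rw [← mul_assoc, inv_mul_cancel₀ hfac, one_mul]
end

section
/- Let (F, ∂_1,...,∂_m) be a differential field (commuting derivations) and suppose ∂_1,...,∂_m are linearly independent over F. For g ∈ GL(m,F), define δ = g^{-1}∂ (a column vector of F-linear combinations of the ∂_i). Then the operators δ_1,...,δ_m pairwise commute if and only if ∂_i(g^j_k) = ∂_j(g^i_k) for all i, j, k = 1,...,m. -/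
open Finset

/-- Let `(F, ∂₁,…,∂ₘ)` be a differential field with commuting derivations that are
linearly independent over `F`, and `g ∈ GL(m,F)`. The operators `δ = g⁻¹∂`
pairwise commute iff `∂ᵢ(gʲₖ) = ∂ⱼ(gⁱₖ)` for all `i,j,k`. -/
theorem delta_commute_iff {F : Type*} [Field F] {m : ℕ}
    (d : Fin m → F → F)
    (hadd : ∀ i a b, d i (a + b) = d i a + d i b)
    (hmul : ∀ i a b, d i (a * b) = d i a * b + a * d i b)
    (hcomm : ∀ i j a, d i (d j a) = d j (d i a))
    (hindep : ∀ c : Fin m → F, (∀ a, ∑ i, c i * d i a = 0) → c = 0)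
    (g : Matrix (Fin m) (Fin m) F) (hg : IsUnit g.det) :
    (∀ k l a, (∑ s, g⁻¹ k s * d s (∑ t, g⁻¹ l t * d t a)) =
        ∑ s, g⁻¹ l s * d s (∑ t, g⁻¹ k t * d t a)) ↔
      (∀ i j k, d i (g j k) = d j (g i k)) := by
  have hd0 : ∀ i, d i (0:F) = 0 := by
    intro i
    have h1 := hadd i 0 0
    rw [add_zero] at h1
    exact (left_eq_add.mp h1)
  have hd1 : ∀ i, d i (1:F) = 0 := by
    intro i
    have h1 := hmul i 1 1
    rw [mul_one, one_mul, mul_one] at h1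
    exact (left_eq_add.mp h1)
  have dsum : ∀ i (f : Fin m → F), d i (∑ t, f t) = ∑ t, d i (f t) := by
    intro i f
    exact map_sum (AddMonoidHom.mk' (d i) (hadd i)) f Finset.univ
  set h := g⁻¹ with hhdef
  have hhg : ∀ i j, ∑ s, h i s * g s j = if i = j then (1:F) else 0 := by
    intro i j
    have h1 := Matrix.nonsing_inv_mul g hg
    have h2 := congrFun (congrFun h1 i) j
    simpa [Matrix.mul_apply, Matrix.one_apply] using h2
  have hgh : ∀ i j, ∑ s, g i s * h s j = if i = j then (1:F) else 0 := by
    intro i j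
    have h1 := Matrix.mul_nonsing_inv g hg
    have h2 := congrFun (congrFun h1 i) j
    simpa [Matrix.mul_apply, Matrix.one_apply] using h2
  have dkron : ∀ (s : Fin m) (i j : Fin m), d s (if i = j then (1:F) else 0) = 0 := by
    intro s i j; split <;> simp [hd0, hd1]
  have e1 : ∀ s l q, ∑ p, d s (h l p) * g p q = -∑ p, h l p * d s (g p q) := by
    intro s l q
    have h1 := congrArg (d s) (hhg l q)
    rw [dsum, dkron] at h1
    have h2 : ∑ p, (d s (h l p) * g p q + h l p * d s (g p q)) = 0 := by
      rw [← h1]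
      exact Finset.sum_congr rfl fun p _ => (hmul s _ _).symm
    rw [Finset.sum_add_distrib] at h2
    exact eq_neg_of_add_eq_zero_left h2
  have colR : ∀ (v : Fin m → F) (t : Fin m), ∑ p, v p * (if p = t then (1:F) else 0) = v t := by
    intro v t; simp [mul_ite]
  have colL : ∀ (v : Fin m → F) (t : Fin m), ∑ p, (if t = p then (1:F) else 0) * v p = v t := by
    intro v t; simp [ite_mul]
  have dinv : ∀ s l t, d s (h l t) = -∑ q, ∑ p, h l p * d s (g p q) * h q t := by
    intro s l t
    calc d s (h l t) = ∑ p, d s (h l p) * (if p = t then (1:F) else 0) := (colR (fun p => d s (h l p)) t).symm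
      _ = ∑ p, ∑ q, d s (h l p) * (g p q * h q t) := by
          refine Finset.sum_congr rfl fun p _ => ?_
          rw [← hgh p t, Finset.mul_sum]
      _ = ∑ q, ∑ p, d s (h l p) * (g p q * h q t) := Finset.sum_comm
      _ = ∑ q, (∑ p, d s (h l p) * g p q) * h q t := by
          refine Finset.sum_congr rfl fun q _ => ?_
          rw [Finset.sum_mul]
          exact Finset.sum_congr rfl fun p _ => by ring
      _ = ∑ q, (-∑ p, h l p * d s (g p q)) * h q t := by
          refine Finset.sum_congr rfl fun q _ => ?_
          rw [e1]
      _ = -∑ q, ∑ p, h l p * d s (g p q) * h q t := by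
          rw [← Finset.sum_neg_distrib]
          refine Finset.sum_congr rfl fun q _ => ?_
          rw [neg_mul, Finset.sum_mul]
  have con1 : ∀ (v : Fin m → F) (i : Fin m), ∑ k, g i k * (∑ s, h k s * v s) = v i := by
    intro v i
    calc ∑ k, g i k * (∑ s, h k s * v s) = ∑ k, ∑ s, g i k * h k s * v s := by
          refine Finset.sum_congr rfl fun k _ => ?_
          rw [Finset.mul_sum]
          exact Finset.sum_congr rfl fun s _ => by ring
      _ = ∑ s, (∑ k, g i k * h k s) * v s := by
          rw [Finset.sum_comm]
          exact Finset.sum_congr rfl fun s _ => (Finset.sum_mul _ _ _).symm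
      _ = v i := by
          simp only [hgh]
          exact colL v i
  have exch : ∀ (a b : Fin m → F) (c : Fin m → Fin m → F),
      ∑ s, a s * ∑ l, b l * c l s = ∑ l, b l * ∑ s, a s * c l s := by
    intro a b c
    simp only [Finset.mul_sum]
    rw [Finset.sum_comm]
    exact Finset.sum_congr rfl fun l _ => Finset.sum_congr rfl fun s _ => by ring
  have expand : ∀ k l a, (∑ s, h k s * d s (∑ t, h l t * d t a)) =
      (∑ t, (∑ s, h k s * d s (h l t)) * d t a) + ∑ s, ∑ t, h k s * (h l t * d s (d t a)) := by
    intro k l a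
    calc ∑ s, h k s * d s (∑ t, h l t * d t a)
        = ∑ s, ∑ t, (h k s * (d s (h l t) * d t a) + h k s * (h l t * d s (d t a))) := by
          refine Finset.sum_congr rfl fun s _ => ?_
          rw [dsum, Finset.mul_sum]
          refine Finset.sum_congr rfl fun t _ => ?_
          rw [hmul]; ring
      _ = (∑ s, ∑ t, h k s * (d s (h l t) * d t a)) + ∑ s, ∑ t, h k s * (h l t * d s (d t a)) := by
          rw [← Finset.sum_add_distrib]
          exact Finset.sum_congr rfl fun s _ => Finset.sum_add_distrib
      _ = _ := by
          congr 1
          rw [Finset.sum_comm]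
          refine Finset.sum_congr rfl fun t _ => ?_
          rw [Finset.sum_mul]
          exact Finset.sum_congr rfl fun s _ => by ring
  have sym2 : ∀ k l a, (∑ s, ∑ t, h k s * (h l t * d s (d t a)))
      = ∑ s, ∑ t, h l s * (h k t * d s (d t a)) := by
    intro k l a
    rw [Finset.sum_comm]
    refine Finset.sum_congr rfl fun s _ => Finset.sum_congr rfl fun t _ => ?_
    rw [hcomm]; ring
  have step1 : (∀ k l a, (∑ s, h k s * d s (∑ t, h l t * d t a)) =
      ∑ s, h l s * d s (∑ t, h k t * d t a)) ↔
      (∀ k l t, ∑ s, h k s * d s (h l t) = ∑ s, h l s * d s (h k t)) := by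
    constructor
    · intro H k l t
      have hz := hindep (fun t => (∑ s, h k s * d s (h l t)) - ∑ s, h l s * d s (h k t)) ?_
      · exact sub_eq_zero.mp (congrFun hz t)
      · intro a
        have h1 := H k l a
        rw [expand k l a, expand l k a, sym2 k l a] at h1
        have h2 : (∑ t, (∑ s, h k s * d s (h l t)) * d t a)
            = ∑ t, (∑ s, h l s * d s (h k t)) * d t a := add_right_cancel h1
        simp only [sub_mul]
        rw [Finset.sum_sub_distrib, h2, sub_self]
    · intro H k l a
      rw [expand k l a, expand l k a, sym2 k l a]
      congr 1
      exact Finset.sum_congr rfl fun t _ => by rw [H k l t]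
  have eC : ∀ k l q, ∑ t, (∑ s, h k s * d s (h l t)) * g t q
      = -∑ s, h k s * (∑ p, h l p * d s (g p q)) := by
    intro k l q
    calc ∑ t, (∑ s, h k s * d s (h l t)) * g t q
        = ∑ t, ∑ s, h k s * (d s (h l t) * g t q) := by
          refine Finset.sum_congr rfl fun t _ => ?_
          rw [Finset.sum_mul]
          exact Finset.sum_congr rfl fun s _ => by ring
      _ = ∑ s, ∑ t, h k s * (d s (h l t) * g t q) := Finset.sum_comm
      _ = ∑ s, h k s * (∑ t, d s (h l t) * g t q) := by
          exact Finset.sum_congr rfl fun s _ => (Finset.mul_sum _ _ _).symm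
      _ = ∑ s, h k s * (-∑ p, h l p * d s (g p q)) := by
          refine Finset.sum_congr rfl fun s _ => ?_
          rw [e1]
      _ = -∑ s, h k s * (∑ p, h l p * d s (g p q)) := by
          rw [← Finset.sum_neg_distrib]
          exact Finset.sum_congr rfl fun s _ => (mul_neg _ _)
  have step2 : (∀ k l t, ∑ s, h k s * d s (h l t) = ∑ s, h l s * d s (h k t)) ↔
      (∀ i j k, d i (g j k) = d j (g i k)) := by
    constructor
    · intro H i j q
      have hB : ∀ k l, ∑ s, h k s * (∑ p, h l p * (d s (g p q) - d p (g s q))) = 0 := by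
        intro k l
        have hi : ∑ s, h k s * (∑ p, h l p * d s (g p q))
            = ∑ s, h l s * (∑ p, h k p * d s (g p q)) := by
          have h1 : ∑ t, (∑ s, h k s * d s (h l t)) * g t q
              = ∑ t, (∑ s, h l s * d s (h k t)) * g t q :=
            Finset.sum_congr rfl fun t _ => by rw [H k l t]
          rw [eC k l q, eC l k q] at h1
          exact neg_injective h1
        have hii : ∑ s, h l s * (∑ p, h k p * d s (g p q))
            = ∑ s, h k s * (∑ p, h l p * d p (g s q)) := by
          simp only [Finset.mul_sum]
          rw [Finset.sum_comm]
          exact Finset.sum_congr rfl fun s _ => Finset.sum_congr rfl fun p _ => by ring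
        calc ∑ s, h k s * (∑ p, h l p * (d s (g p q) - d p (g s q)))
            = (∑ s, h k s * (∑ p, h l p * d s (g p q)))
              - ∑ s, h k s * (∑ p, h l p * d p (g s q)) := by
              rw [← Finset.sum_sub_distrib]
              refine Finset.sum_congr rfl fun s _ => ?_
              rw [← mul_sub]
              congr 1
              rw [← Finset.sum_sub_distrib]
              exact Finset.sum_congr rfl fun p _ => (mul_sub _ _ _)
          _ = 0 := by rw [hi.trans hii, sub_self]
      have hX : d i (g j q) - d j (g i q) = 0 := by
        calc d i (g j q) - d j (g i q)
            = ∑ k, g i k * (∑ s, h k s * (d s (g j q) - d j (g s q))) := by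
              exact (con1 (fun s => d s (g j q) - d j (g s q)) i).symm
          _ = ∑ k, g i k * (∑ s, h k s * (∑ l, g j l *
                (∑ p, h l p * (d s (g p q) - d p (g s q))))) := by
              refine Finset.sum_congr rfl fun k _ => ?_
              congr 1
              refine Finset.sum_congr rfl fun s _ => ?_
              congr 1
              exact (con1 (fun p => d s (g p q) - d p (g s q)) j).symm
          _ = ∑ k, g i k * (∑ l, g j l * (∑ s, h k s *
                (∑ p, h l p * (d s (g p q) - d p (g s q))))) := by
              refine Finset.sum_congr rfl fun k _ => ?_
              congr 1
              exact exch (fun s => h k s) (fun l => g j l)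
                (fun l s => ∑ p, h l p * (d s (g p q) - d p (g s q)))
          _ = 0 := by
              simp only [hB]
              simp
      exact sub_eq_zero.mp hX
    · intro H k l t
      have d3 : ∀ k l, ∑ s, h k s * d s (h l t)
          = -∑ q, ∑ s, ∑ p, h k s * h l p * d s (g p q) * h q t := by
        intro k l
        calc ∑ s, h k s * d s (h l t)
            = ∑ s, h k s * (-∑ q, ∑ p, h l p * d s (g p q) * h q t) := by
              refine Finset.sum_congr rfl fun s _ => ?_
              rw [dinv]
          _ = -∑ s, ∑ q, ∑ p, h k s * h l p * d s (g p q) * h q t := by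
              rw [← Finset.sum_neg_distrib]
              refine Finset.sum_congr rfl fun s _ => ?_
              rw [mul_neg, Finset.mul_sum]
              congr 1
              refine Finset.sum_congr rfl fun q _ => ?_
              rw [Finset.mul_sum]
              exact Finset.sum_congr rfl fun p _ => by ring
          _ = -∑ q, ∑ s, ∑ p, h k s * h l p * d s (g p q) * h q t := by
              rw [Finset.sum_comm]
      rw [d3 k l, d3 l k]
      congr 1
      refine Finset.sum_congr rfl fun q _ => ?_
      rw [Finset.sum_comm]
      refine Finset.sum_congr rfl fun s _ => Finset.sum_congr rfl fun p _ => ?_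
      rw [H p s q]; ring
  exact step1.trans step2
end

section
/- Let (F,∂) be a differential field with commuting derivations ∂_1,...,∂_m. If g ∈ GL^∂(m,F) and δ = g^{-1}∂, then GL^δ(m,F) = g^{-1} · GL^∂(m,F), i.e., a matrix S ∈ GL(m,F) satisfies δ_i S^j_k = δ_j S^i_k for all i,j,k if and only if gS ∈ GL^∂(m,F). -/
open Matrix

private lemma symm_conj_iff {F : Type*} [Field F] {m : ℕ}
    (g : Matrix (Fin m) (Fin m) F) (hg : IsUnit g.det)
    (N : Matrix (Fin m) (Fin m) F) :
    Nᵀ = N ↔ (g * N * gᵀ)ᵀ = g * N * gᵀ := by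
  have hgT : IsUnit gᵀ.det := by rwa [Matrix.det_transpose]
  have cancel : ∀ M : Matrix (Fin m) (Fin m) F, g⁻¹ * (g * M * gᵀ) * gᵀ⁻¹ = M := by
    intro M
    rw [Matrix.mul_assoc g M, ← Matrix.mul_assoc g⁻¹, Matrix.nonsing_inv_mul g hg,
      Matrix.one_mul, Matrix.mul_assoc, Matrix.mul_nonsing_inv _ hgT, Matrix.mul_one]
  have hT : ∀ M : Matrix (Fin m) (Fin m) F, (g * M * gᵀ)ᵀ = g * Mᵀ * gᵀ := by
    intro M
    rw [Matrix.transpose_mul, Matrix.transpose_mul, Matrix.transpose_transpose,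
      Matrix.mul_assoc]
  constructor
  · intro h; rw [hT, h]
  · intro h
    rw [hT] at h
    have := congrArg (fun X => g⁻¹ * X * gᵀ⁻¹) h
    simpa [cancel] using this

/-- If `g ∈ GL^∂(m,F)` and `δ = g⁻¹∂`, then `GL^δ(m,F) = g⁻¹ · GL^∂(m,F)`:
an invertible `S` satisfies `δᵢ Sʲₖ = δⱼ Sⁱₖ` for all `i,j,k` iff
`gS ∈ GL^∂(m,F)`. -/
theorem GLdelta_eq_inv_mul_GLpartial {F : Type*} [Field F] {m : ℕ}
    (d : Fin m → F → F)
    (hadd : ∀ i a b, d i (a + b) = d i a + d i b)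
    (hmul : ∀ i a b, d i (a * b) = d i a * b + a * d i b)
    (hcomm : ∀ i j a, d i (d j a) = d j (d i a))
    (g : Matrix (Fin m) (Fin m) F) (hg : IsUnit g.det)
    (hgsym : ∀ i j k, d i (g j k) = d j (g i k))
    (S : Matrix (Fin m) (Fin m) F) (hS : IsUnit S.det) :
    (∀ i j k, (∑ s, g⁻¹ i s * d s (S j k)) = ∑ s, g⁻¹ j s * d s (S i k)) ↔
      (∀ i j k, d i ((g * S) j k) = d j ((g * S) i k)) := by
  have hzero : ∀ i, d i (0 : F) = 0 := by
    intro i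
    have h := hadd i 0 0
    rw [add_zero] at h
    exact (right_eq_add.mp h)
  have hsum : ∀ i (s : Finset (Fin m)) (f : Fin m → F),
      d i (∑ t ∈ s, f t) = ∑ t ∈ s, d i (f t) := by
    intro i s f
    induction s using Finset.induction_on with
    | empty => simpa using hzero i
    | insert a s h ih => rw [Finset.sum_insert h, hadd, ih, Finset.sum_insert h]
  -- the matrix A k
  set A : Fin m → Matrix (Fin m) (Fin m) F := fun k => Matrix.of (fun i j => d i (S j k)) with hA
  -- rewrite RHS condition
  have key : ∀ i j k, (d i ((g * S) j k) = d j ((g * S) i k)) ↔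
      ((A k * gᵀ) i j = (A k * gᵀ) j i) := by
    intro i j k
    rw [Matrix.mul_apply, Matrix.mul_apply, hsum, hsum]
    simp only [hmul]
    rw [Finset.sum_add_distrib, Finset.sum_add_distrib]
    have hs : ∑ t, d i (g j t) * S t k = ∑ t, d j (g i t) * S t k :=
      Finset.sum_congr rfl fun t _ => by rw [hgsym]
    rw [hs]
    have e1 : (A k * gᵀ) i j = ∑ t, g j t * d i (S t k) := by
      simp [Matrix.mul_apply, hA, mul_comm]
    have e2 : (A k * gᵀ) j i = ∑ t, g i t * d j (S t k) := by
      simp [Matrix.mul_apply, hA, mul_comm]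
    rw [e1, e2]
    constructor
    · intro h; exact add_left_cancel h
    · intro h; rw [h]
  have lkey : ∀ i j k, ((∑ s, g⁻¹ i s * d s (S j k)) = ∑ s, g⁻¹ j s * d s (S i k)) ↔
      ((g⁻¹ * A k) i j = (g⁻¹ * A k) j i) := by
    intro i j k
    simp [Matrix.mul_apply, hA]
  have hAeq : ∀ k, A k * gᵀ = g * (g⁻¹ * A k) * gᵀ := by
    intro k
    rw [← Matrix.mul_assoc, Matrix.mul_nonsing_inv g hg, Matrix.one_mul]
  constructor
  · intro h i j k
    rw [key]
    have hsym : (g⁻¹ * A k)ᵀ = g⁻¹ * A k := by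
      ext a b
      rw [Matrix.transpose_apply]
      exact (lkey b a k).mp (h b a k)
    have := (symm_conj_iff g hg (g⁻¹ * A k)).mp hsym
    rw [← hAeq] at this
    calc (A k * gᵀ) i j = (A k * gᵀ)ᵀ j i := rfl
      _ = (A k * gᵀ) j i := by rw [this]
  · intro h i j k
    rw [lkey]
    have hsym : (A k * gᵀ)ᵀ = A k * gᵀ := by
      ext a b
      rw [Matrix.transpose_apply]
      exact ((key b a k).mp (h b a k))
    rw [hAeq] at hsym
    have := (symm_conj_iff g hg (g⁻¹ * A k)).mpr hsym
    calc (g⁻¹ * A k) i j = (g⁻¹ * A k)ᵀ j i := rfl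
      _ = (g⁻¹ * A k) j i := by rw [this]
end

section
/- Let (F, ∂_1,...,∂_m) be a differential field of characteristic zero. Then the derivations ∂_1,...,∂_m are linearly independent over F if and only if there is no nonzero ∂-differential polynomial over F (in any finite set of differential indeterminates) that vanishes at all values of the indeterminates taken in F. -/
/-- The iterated derivative `∂^α = ∂₁^{α₁} ∘ ⋯ ∘ ∂ₘ^{αₘ}`. -/
def dpow {F : Type*} {m : ℕ} (d : Fin m → F → F) (α : Fin m → ℕ) : F → F :=
  (List.ofFn fun i => (d i)^[α i]).foldr (· ∘ ·) id

namespace DiffIndep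

variable {F : Type*} [Field F]

lemma iter_add (f : F → F) (hf : ∀ a b, f (a + b) = f a + f b) (k : ℕ) (a b : F) :
    f^[k] (a + b) = f^[k] a + f^[k] b := by
  induction k with
  | zero => simp
  | succ k ih =>
      rw [Function.iterate_succ_apply', Function.iterate_succ_apply',
        Function.iterate_succ_apply', ih, hf]

lemma comm_iter (f g : F → F) (h : ∀ a, f (g a) = g (f a)) (k : ℕ) (a : F) :
    f (g^[k] a) = g^[k] (f a) := by
  induction k generalizing a with
  | zero => simp
  | succ k ih =>
      rw [Function.iterate_succ_apply, Function.iterate_succ_apply, ih, h]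

section dpowBasic

variable {m : ℕ}

lemma dpow_nil (d : Fin 0 → F → F) (α : Fin 0 → ℕ) : dpow d α = id := by
  simp [dpow]

lemma dpow_cons (d : Fin (m + 1) → F → F) (α : Fin (m + 1) → ℕ) :
    dpow d α = (d 0)^[α 0] ∘ dpow (fun i => d i.succ) (fun i => α i.succ) := by
  simp [dpow, List.ofFn_succ]

lemma dpow_add (d : Fin m → F → F) (hadd : ∀ i a b, d i (a + b) = d i a + d i b)
    (α : Fin m → ℕ) (a b : F) : dpow d α (a + b) = dpow d α a + dpow d α b := by
  induction m with
  | zero => simp [dpow_nil]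
  | succ m ih =>
      rw [dpow_cons]
      simp only [Function.comp_apply]
      rw [ih _ (fun i a b => hadd i.succ a b), iter_add _ (hadd 0)]

lemma dpow_zero_arg (d : Fin m → F → F) (hadd : ∀ i a b, d i (a + b) = d i a + d i b)
    (α : Fin m → ℕ) : dpow d α 0 = 0 := by
  have := dpow_add d hadd α 0 0
  simpa using this.symm

lemma dpow_natmul (d : Fin m → F → F) (hadd : ∀ i a b, d i (a + b) = d i a + d i b)
    (α : Fin m → ℕ) (n : ℕ) (a : F) : dpow d α ((n : F) * a) = (n : F) * dpow d α a := by
  induction n with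
  | zero => simpa using dpow_zero_arg d hadd α
  | succ n ih =>
      push_cast
      rw [add_mul, add_mul, one_mul, one_mul, dpow_add d hadd, ih]

lemma dpow_zero_idx (d : Fin m → F → F) : dpow d 0 = id := by
  induction m with
  | zero => simp [dpow_nil]
  | succ m ih =>
      rw [dpow_cons]
      have h1 : (fun i : Fin m => (0 : Fin (m+1) → ℕ) i.succ) = 0 := rfl
      rw [h1, ih]
      simp [show ((0 : Fin (m+1) → ℕ) 0) = 0 from rfl]

lemma dpow_comm_d (d : Fin m → F → F) (f : F → F) (hf : ∀ i a, f (d i a) = d i (f a))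
    (α : Fin m → ℕ) (a : F) : f (dpow d α a) = dpow d α (f a) := by
  induction m with
  | zero => simp [dpow_nil]
  | succ m ih =>
      rw [dpow_cons]
      simp only [Function.comp_apply]
      rw [comm_iter f (d 0) (fun a => hf 0 a)]
      congr 1
      exact ih _ (fun i a => hf i.succ a) _

lemma dpow_step (d : Fin m → F → F) (hcomm : ∀ i j a, d i (d j a) = d j (d i a))
    (i : Fin m) (α : Fin m → ℕ) (a : F) :
    dpow d (α + Pi.single i 1) a = d i (dpow d α a) := by
  induction m with
  | zero => exact i.elim0
  | succ m ih =>
      rw [dpow_cons, dpow_cons]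
      induction i using Fin.cases with
      | zero =>
          have h0 : (α + (Pi.single (0 : Fin (m+1)) 1 : Fin (m+1) → ℕ)) 0 = α 0 + 1 := by
            simp
          have ht : (fun j : Fin m => (α + (Pi.single (0 : Fin (m+1)) 1 : Fin (m+1) → ℕ)) j.succ)
              = fun j : Fin m => α j.succ := by
            funext j
            simp [Pi.single_eq_of_ne (Fin.succ_ne_zero j)]
          simp only [h0, ht, Function.comp_apply]
          rw [Function.iterate_succ_apply']
      | succ j =>
          have h0 : (α + (Pi.single (j.succ : Fin (m+1)) 1 : Fin (m+1) → ℕ)) 0 = α 0 := by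
            simp [Pi.single_eq_of_ne (Fin.succ_ne_zero j).symm]
          have ht : (fun k : Fin m => (α + (Pi.single (j.succ : Fin (m+1)) 1 : Fin (m+1) → ℕ)) k.succ)
              = (fun k : Fin m => α k.succ) + Pi.single j 1 := by
            funext k
            by_cases hk : k = j
            · subst hk; simp
            · have h2 : k.succ ≠ j.succ := fun h => hk (Fin.succ_injective _ h)
              simp [Pi.single_eq_of_ne hk, Pi.single_eq_of_ne h2]
          simp only [h0, ht, Function.comp_apply]
          rw [ih (fun k => d k.succ) (fun a b c => hcomm _ _ _) j (fun k => α k.succ)]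
          exact (comm_iter (d j.succ) (d 0) (fun x => hcomm _ _ x) (α 0) _).symm

end dpowBasic
end DiffIndep
section Part2

namespace DiffIndep

variable {F : Type*} [Field F] {m : ℕ}

/-- total degree of a multi-index -/
def deg (α : Fin m → ℕ) : ℕ := ∑ i, α i

lemma deg_add_single (α : Fin m → ℕ) (i : Fin m) :
    deg (α + Pi.single i 1) = deg α + 1 := by
  unfold deg
  simp only [Pi.add_apply]
  rw [Finset.sum_add_distrib]
  simp

lemma sub_add_single (α : Fin m → ℕ) (i : Fin m) (h : α i ≠ 0) :
    (α - Pi.single i 1) + Pi.single i 1 = α := by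
  funext k
  by_cases hk : k = i
  · subst hk
    simp only [Pi.add_apply, Pi.sub_apply, Pi.single_eq_same]
    omega
  · simp [Pi.single_eq_of_ne hk]

lemma deg_sub_single (α : Fin m → ℕ) (i : Fin m) (h : α i ≠ 0) :
    deg (α - Pi.single i 1) + 1 = deg α := by
  conv_rhs => rw [← sub_add_single α i h]
  rw [deg_add_single]

/-- span of the `dpow`'s of multi-indices of degree `≤ k - 2` (真 bound). -/
def Sp (d : Fin m → F → F) (k : ℕ) : Submodule F (F → F) :=
  Submodule.span F (dpow d '' {β | deg β + 2 ≤ k})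

lemma dpow_mem_Sp {d : Fin m → F → F} {k : ℕ} {β : Fin m → ℕ} (hβ : deg β + 2 ≤ k) :
    dpow d β ∈ Sp d k :=
  Submodule.subset_span ⟨β, hβ, rfl⟩

lemma Sp_mono {d : Fin m → F → F} {k k' : ℕ} (h : k ≤ k') : Sp d k ≤ Sp d k' :=
  Submodule.span_mono (Set.image_mono fun β hβ => le_trans hβ h)

section withd

variable (d : Fin m → F → F)
variable (hadd : ∀ i a b, d i (a + b) = d i a + d i b)
variable (hmul : ∀ i a b, d i (a * b) = d i a * b + a * d i b)
variable (hcomm : ∀ i j a, d i (d j a) = d j (d i a))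

include hadd in
lemma d_zero (i : Fin m) : d i 0 = 0 := by
  have := hadd i 0 0
  simpa using this.symm

include hadd in
lemma d_sum {ι : Type*} (i : Fin m) (s : Finset ι) (f : ι → F) :
    d i (∑ x ∈ s, f x) = ∑ x ∈ s, d i (f x) :=
  map_sum (AddMonoidHom.mk' (d i) (hadd i)) f s

include hadd hmul hcomm in
lemma Di_mem_Sp (i : Fin m) (k : ℕ) {g : F → F} (hg : g ∈ Sp d k) :
    (fun a => d i (g a)) ∈ Sp d (k + 1) := by
  induction hg using Submodule.span_induction with
  | mem x hx =>
      obtain ⟨β, hβ, rfl⟩ := hx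
      have hβ' : deg β + 2 ≤ k := hβ
      have h1 : (fun a => d i (dpow d β a)) = dpow d (β + Pi.single i 1) :=
        funext fun a => (dpow_step d hcomm i β a).symm
      rw [h1]
      exact dpow_mem_Sp (by rw [deg_add_single]; omega)
  | zero =>
      have h1 : (fun a => d i ((0 : F → F) a)) = 0 :=
        funext fun a => by simpa using d_zero d hadd i
      rw [h1]; exact Submodule.zero_mem _
  | add x y hx hy ihx ihy =>
      have h1 : (fun a => d i ((x + y) a)) = (fun a => d i (x a)) + fun a => d i (y a) :=
        funext fun a => by simp [hadd]
      rw [h1]; exact Submodule.add_mem _ ihx ihy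
  | smul c x hx ihx =>
      have h1 : (fun a => d i ((c • x) a)) = (d i c) • x + c • fun a => d i (x a) :=
        funext fun a => by
          simp only [Pi.smul_apply, smul_eq_mul, Pi.add_apply]
          exact hmul i c (x a)
      rw [h1]
      exact Submodule.add_mem _
        (Submodule.smul_mem _ _ (Sp_mono (Nat.le_succ k) hx))
        (Submodule.smul_mem _ _ ihx)

include hadd hmul hcomm in
lemma KL : ∀ (n : ℕ) (α : Fin m → ℕ), deg α ≤ n → ∀ b : F,
    (fun a => dpow d α (b * a)) - b • dpow d α
      - (∑ i, (((α i : ℕ) : F) * d i b) • dpow d (α - Pi.single i 1)) ∈ Sp d (deg α) := by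
  intro n
  induction n with
  | zero =>
      intro α hα b
      have hα0 : α = 0 := by
        funext i
        exact (Finset.sum_eq_zero_iff.mp (Nat.le_zero.mp hα)) i (Finset.mem_univ i)
      subst hα0
      have h1 : (fun a => dpow d (0 : Fin m → ℕ) (b * a)) - b • dpow d (0 : Fin m → ℕ)
          - (∑ i, ((((0 : Fin m → ℕ) i : ℕ) : F) * d i b) • dpow d ((0 : Fin m → ℕ) - Pi.single i 1)) = 0 := by
        rw [dpow_zero_idx]
        funext a
        simp
      rw [h1]
      exact Submodule.zero_mem _
  | succ n IH =>
      intro α hα b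
      by_cases hn : deg α ≤ n
      · exact IH α hn b
      have hdeg : deg α = n + 1 := by omega
      have hex : ∃ i, α i ≠ 0 := by
        by_contra hcon
        push_neg at hcon
        have : deg α = 0 := Finset.sum_eq_zero fun i _ => hcon i
        omega
      obtain ⟨i, hi⟩ := hex
      set α' : Fin m → ℕ := α - Pi.single i 1 with hα'def
      have hsum : α' + Pi.single i 1 = α := sub_add_single α i hi
      have hdeg' : deg α' = n := by
        have h := deg_sub_single α i hi
        rw [← hα'def] at h
        omega
      set S' : F → F := ∑ j, (((α' j : ℕ) : F) * d j b) • dpow d (α' - Pi.single j 1) with hS'def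
      set E' : F → F := (fun a => dpow d α' (b * a)) - b • dpow d α' - S' with hE'def
      have hE'mem : E' ∈ Sp d n := by
        rw [← hdeg']
        exact IH α' (le_of_eq hdeg') b
      -- main pointwise expansion
      have hXa : ∀ a, dpow d α (b * a) = d i b * dpow d α' a + b * dpow d α a
          + (∑ j, d i (((α' j : ℕ) : F) * d j b) * dpow d (α' - Pi.single j 1) a)
          + (∑ j, (((α' j : ℕ) : F) * d j b) * dpow d ((α' - Pi.single j 1) + Pi.single i 1) a)
          + d i (E' a) := by
        intro a
        have h1 : dpow d α (b * a) = d i (dpow d α' (b * a)) := by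
          conv_lhs => rw [← hsum]
          rw [dpow_step d hcomm]
        have h2 : dpow d α' (b * a) = b * dpow d α' a + S' a + E' a := by
          simp only [hE'def, Pi.sub_apply, Pi.smul_apply, smul_eq_mul]
          ring
        rw [h1, h2, hadd i _ (E' a), hadd i _ (S' a), hmul i b (dpow d α' a)]
        have h3 : d i (dpow d α' a) = dpow d α a := by
          conv_rhs => rw [← hsum]
          rw [dpow_step d hcomm]
        have h4 : S' a = ∑ j, (((α' j : ℕ) : F) * d j b) * dpow d (α' - Pi.single j 1) a := by
          rw [hS'def]
          simp [Finset.sum_apply]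
        have h5 : d i (S' a) = (∑ j, d i (((α' j : ℕ) : F) * d j b) * dpow d (α' - Pi.single j 1) a)
            + (∑ j, (((α' j : ℕ) : F) * d j b) * dpow d ((α' - Pi.single j 1) + Pi.single i 1) a) := by
          rw [h4, d_sum d hadd, ← Finset.sum_add_distrib]
          refine Finset.sum_congr rfl fun j _ => ?_
          rw [hmul i _ (dpow d (α' - Pi.single j 1) a), dpow_step d hcomm]
        rw [h3, h5]
        ring
      -- key cancellation
      have hKey : ∀ a, (∑ j, (((α' j : ℕ) : F) * d j b) * dpow d ((α' - Pi.single j 1) + Pi.single i 1) a)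
          = (∑ j, (((α j : ℕ) : F) * d j b) * dpow d (α - Pi.single j 1) a) - d i b * dpow d α' a := by
        intro a
        rw [Finset.sum_eq_sum_sdiff_singleton_add (Finset.mem_univ i)]
        have hc : ∀ j ∈ Finset.univ \ {i},
            (((α' j : ℕ) : F) * d j b) * dpow d ((α' - Pi.single j 1) + Pi.single i 1) a
            = (((α j : ℕ) : F) * d j b) * dpow d (α - Pi.single j 1) a := by
          intro j hj
          have hji : j ≠ i := by simpa using (Finset.mem_sdiff.mp hj).2
          have e1 : α' j = α j := by
            rw [hα'def]
            simp [Pi.single_eq_of_ne hji]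
          have e2 : (α' - Pi.single j 1) + Pi.single i 1 = α - Pi.single j 1 := by
            funext k
            by_cases hk : k = i
            · subst hk
              simp only [hα'def, Pi.add_apply, Pi.sub_apply, Pi.single_eq_same,
                Pi.single_eq_of_ne (Ne.symm hji)]
              omega
            · simp only [hα'def, Pi.add_apply, Pi.sub_apply, Pi.single_eq_of_ne hk]
              omega
          rw [e1, e2]
        rw [Finset.sum_congr rfl hc]
        have h8 := Finset.sum_eq_sum_sdiff_singleton_add (Finset.mem_univ i)
          (fun j => (((α j : ℕ) : F) * d j b) * dpow d (α - Pi.single j 1) a)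
        rw [h8]
        -- now handle the `i` terms
        by_cases h0 : α' i = 0
        · have hαi : α i = 1 := by
            have : α' i = α i - 1 := by simp [hα'def]
            omega
          have e3 : α - Pi.single i 1 = α' := rfl
          rw [h0, hαi, e3]
          push_cast
          ring
        · have e4 : (α' - Pi.single i 1) + Pi.single i 1 = α' := sub_add_single α' i h0
          have e5 : α - Pi.single i 1 = α' := rfl
          have e6 : ((α i : ℕ) : F) = ((α' i : ℕ) : F) + 1 := by
            have : α i = α' i + 1 := by
              have : α' i = α i - 1 := by simp [hα'def]
              omega
            rw [this]
            push_cast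
            ring
          rw [e4, e5, e6]
          ring
      -- assemble
      have hR1 : (∑ j, (d i (((α' j : ℕ) : F) * d j b)) • dpow d (α' - Pi.single j 1))
          ∈ Sp d (n + 1) := by
        refine Submodule.sum_mem _ fun j _ => ?_
        by_cases h0 : α' j = 0
        · have : d i (((α' j : ℕ) : F) * d j b) = 0 := by
            rw [h0]
            simpa using d_zero d hadd i
          rw [this, zero_smul]
          exact Submodule.zero_mem _
        · refine Submodule.smul_mem _ _ (dpow_mem_Sp ?_)
          have h7 : deg (α' - Pi.single j 1) + 1 = deg α' := deg_sub_single α' j h0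
          omega
      have hR2 : (fun a => d i (E' a)) ∈ Sp d (n + 1) := Di_mem_Sp d hadd hmul hcomm i n hE'mem
      have hfin : (fun a => dpow d α (b * a)) - b • dpow d α
          - (∑ j, (((α j : ℕ) : F) * d j b) • dpow d (α - Pi.single j 1))
          = (∑ j, (d i (((α' j : ℕ) : F) * d j b)) • dpow d (α' - Pi.single j 1))
            + fun a => d i (E' a) := by
        funext a
        have h6 := hXa a
        have h7 := hKey a
        simp only [Pi.sub_apply, Pi.add_apply, Pi.smul_apply, smul_eq_mul, Finset.sum_apply]
        rw [h6, h7]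
        ring
      rw [hdeg, hfin]
      exact Submodule.add_mem _ hR1 hR2

end withd
end DiffIndep
end Part2
section Part3

namespace DiffIndep

variable {F : Type*} [Field F] [CharZero F] {m : ℕ}

lemma sum_union_rep {ι : Type*} [DecidableEq ι] {M : Type*} [AddCommGroup M] [Module F M]
    (v : ι → M) (u₁ u₂ : Finset ι) (e₁ e₂ : ι → F) :
    ∑ γ ∈ u₁, e₁ γ • v γ + ∑ γ ∈ u₂, e₂ γ • v γ
      = ∑ γ ∈ u₁ ∪ u₂, ((if γ ∈ u₁ then e₁ γ else 0) + (if γ ∈ u₂ then e₂ γ else 0)) • v γ := by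
  simp only [add_smul, ite_smul, zero_smul]
  rw [Finset.sum_add_distrib, Finset.sum_ite_mem, Finset.sum_ite_mem,
    Finset.union_inter_cancel_left, Finset.union_inter_cancel_right]

lemma Sp_rep {d : Fin m → F → F} {k : ℕ} {g : F → F} (hg : g ∈ Sp d k) :
    ∃ (u : Finset (Fin m → ℕ)) (e : (Fin m → ℕ) → F),
      (∀ γ ∈ u, deg γ + 2 ≤ k) ∧ g = ∑ γ ∈ u, e γ • dpow d γ := by
  classical
  induction hg using Submodule.span_induction with
  | mem x hx =>
      obtain ⟨β, hβ, rfl⟩ := hx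
      exact ⟨{β}, fun _ => 1, by simpa using hβ, by simp⟩
  | zero => exact ⟨∅, 0, by simp, by simp⟩
  | add x y hx hy ihx ihy =>
      obtain ⟨u₁, e₁, hu₁, rfl⟩ := ihx
      obtain ⟨u₂, e₂, hu₂, rfl⟩ := ihy
      refine ⟨u₁ ∪ u₂, _, ?_, sum_union_rep _ u₁ u₂ e₁ e₂⟩
      intro γ hγ
      rcases Finset.mem_union.mp hγ with h | h
      · exact hu₁ γ h
      · exact hu₂ γ h
  | smul c x hx ihx =>
      obtain ⟨u, e, hu, rfl⟩ := ihx
      refine ⟨u, fun γ => c * e γ, hu, ?_⟩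
      rw [Finset.smul_sum]
      exact Finset.sum_congr rfl fun γ _ => (smul_smul c (e γ) _)

section withd

variable (d : Fin m → F → F)
variable (hadd : ∀ i a b, d i (a + b) = d i a + d i b)
variable (hmul : ∀ i a b, d i (a * b) = d i a * b + a * d i b)
variable (hcomm : ∀ i j a, d i (d j a) = d j (d i a))

set_option maxHeartbeats 2000000 in
include hadd hmul hcomm in
/-- Lemma A: the operators `∂^α` are linearly independent over `F`. -/
lemma lemA (hindep : ∀ c : Fin m → F, (∀ a, ∑ i, c i * d i a = 0) → c = 0) :
    ∀ (N : ℕ) (t : Finset (Fin m → ℕ)) (c : (Fin m → ℕ) → F),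
      (∀ α ∈ t, deg α ≤ N) → (∑ α ∈ t, c α • dpow d α) = 0 → ∀ α ∈ t, c α = 0 := by
  classical
  intro N
  induction N with
  | zero =>
      intro t c ht hrel α hα
      have hz : ∀ β ∈ t, β = (0 : Fin m → ℕ) := by
        intro β hβ
        funext i
        exact (Finset.sum_eq_zero_iff.mp (Nat.le_zero.mp (ht β hβ))) i (Finset.mem_univ i)
      have ht0 : t = {(0 : Fin m → ℕ)} :=
        Finset.eq_singleton_iff_unique_mem.mpr ⟨hz α hα ▸ hα, hz⟩
      have h1 : (∑ β ∈ t, c β • dpow d β) 1 = 0 := by rw [hrel]; rfl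
      rw [ht0] at h1
      simp only [Finset.sum_singleton, Pi.smul_apply, smul_eq_mul, dpow_zero_idx, id_eq,
        mul_one] at h1
      rw [hz α hα, h1]
  | succ N IH =>
      intro t c ht hrel
      have htop : ∀ α ∈ t, deg α = N + 1 → c α = 0 := by
        intro α0 hα0t hα0deg
        have hex : ∃ i, α0 i ≠ 0 := by
          by_contra hcon
          push_neg at hcon
          have : deg α0 = 0 := Finset.sum_eq_zero fun i _ => hcon i
          omega
        obtain ⟨i0, hi0⟩ := hex
        set β : Fin m → ℕ := α0 - Pi.single i0 1 with hβdef
        have hβα0 : β + Pi.single i0 1 = α0 := sub_add_single α0 i0 hi0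
        have hβdeg : deg β = N := by
          have h := deg_sub_single α0 i0 hi0
          rw [← hβdef] at h
          omega
        set cc : Fin m → F := fun i =>
          if β + Pi.single i 1 ∈ t then c (β + Pi.single i 1) * ((β i + 1 : ℕ) : F) else 0
          with hccdef
        have hcczero : ∀ b, ∑ i, cc i * d i b = 0 := by
          intro b
          -- the vanishing combination, evaluated against b
          set Sα : (Fin m → ℕ) → (F → F) := fun α =>
            ∑ i, (((α i : ℕ) : F) * d i b) • dpow d (α - Pi.single i 1) with hSdef
          set Eα : (Fin m → ℕ) → (F → F) := fun α =>
            (fun a => dpow d α (b * a)) - b • dpow d α - Sα α with hEdef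
          have hEmem : ∀ α ∈ t, Eα α ∈ Sp d (N + 1) := fun α hα =>
            Sp_mono (ht α hα) (KL d hadd hmul hcomm (N + 1) α (ht α hα) b)
          have hZ1 : ∑ α ∈ t, c α • (fun a => dpow d α (b * a)) = (0 : F → F) := by
            funext a
            have h := congrFun hrel (b * a)
            simpa [Finset.sum_apply] using h
          have hZ2 : ∑ α ∈ t, c α • (b • dpow d α) = (0 : F → F) := by
            have h : ∀ α ∈ t, c α • (b • dpow d α) = b • (c α • dpow d α) :=
              fun α _ => smul_comm _ _ _
            rw [Finset.sum_congr rfl h, ← Finset.smul_sum, hrel, smul_zero]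
          have hW : ∑ α ∈ t, c α • Sα α ∈ Sp d (N + 1) := by
            have hsplit : ∑ α ∈ t, c α • Sα α = -(∑ α ∈ t, c α • Eα α) := by
              have h1 : ∑ α ∈ t, c α • Eα α
                  = ∑ α ∈ t, c α • (fun a => dpow d α (b * a))
                    - ∑ α ∈ t, c α • (b • dpow d α) - ∑ α ∈ t, c α • Sα α := by
                rw [← Finset.sum_sub_distrib, ← Finset.sum_sub_distrib]
                refine Finset.sum_congr rfl fun α _ => ?_
                rw [hEdef]
                simp only [smul_sub]
              rw [h1, hZ1, hZ2]
              abel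
            rw [hsplit]
            exact Submodule.neg_mem _ (Submodule.sum_mem _ fun α hα =>
              Submodule.smul_mem _ _ (hEmem α hα))
          obtain ⟨u₂, e, hu₂, hWrep⟩ := Sp_rep hW
          -- double sum form of W
          have hWds : ∑ α ∈ t, c α • Sα α
              = ∑ p ∈ t ×ˢ (Finset.univ : Finset (Fin m)),
                  (c p.1 * (((p.1 p.2 : ℕ) : F) * d p.2 b)) • dpow d (p.1 - Pi.single p.2 1) := by
            rw [Finset.sum_product]
            refine Finset.sum_congr rfl fun α _ => ?_
            rw [hSdef]
            rw [Finset.smul_sum]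
            exact Finset.sum_congr rfl fun i _ => (smul_smul _ _ _)
          set s₂ : Finset ((Fin m → ℕ) × Fin m) :=
            (t ×ˢ (Finset.univ : Finset (Fin m))).filter (fun p => p.1 p.2 ≠ 0) with hs₂def
          have hfil : ∑ p ∈ s₂,
              (c p.1 * (((p.1 p.2 : ℕ) : F) * d p.2 b)) • dpow d (p.1 - Pi.single p.2 1)
              = ∑ p ∈ t ×ˢ (Finset.univ : Finset (Fin m)),
                  (c p.1 * (((p.1 p.2 : ℕ) : F) * d p.2 b)) • dpow d (p.1 - Pi.single p.2 1) := by
            refine Finset.sum_filter_of_ne fun p hp hne => ?_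
            intro h0
            apply hne
            rw [h0]
            simp
          set hcoef : (Fin m → ℕ) → F := fun γ =>
            ∑ p ∈ s₂.filter (fun p => p.1 - Pi.single p.2 1 = γ),
              c p.1 * (((p.1 p.2 : ℕ) : F) * d p.2 b) with hcoefdef
          set u₁ : Finset (Fin m → ℕ) := s₂.image (fun p => p.1 - Pi.single p.2 1) with hu₁def
          have himg : ∑ γ ∈ u₁, hcoef γ • dpow d γ
              = ∑ p ∈ s₂,
                  (c p.1 * (((p.1 p.2 : ℕ) : F) * d p.2 b)) • dpow d (p.1 - Pi.single p.2 1) := by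
            refine Finset.sum_image' _ fun p hp => ?_
            rw [hcoefdef]
            rw [Finset.sum_smul]
            refine Finset.sum_congr rfl fun q hq => ?_
            rw [(Finset.mem_filter.mp hq).2]
          -- the combined relation
          have hcomb : ∑ γ ∈ u₁ ∪ u₂,
              ((if γ ∈ u₁ then hcoef γ else 0) + (if γ ∈ u₂ then -e γ else 0)) • dpow d γ = 0 := by
            rw [← sum_union_rep, himg, hfil, ← hWds, hWrep, ← Finset.sum_add_distrib]
            refine Finset.sum_eq_zero fun γ _ => ?_
            simp
          have hbound : ∀ γ ∈ u₁ ∪ u₂, deg γ ≤ N := by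
            intro γ hγ
            rcases Finset.mem_union.mp hγ with h | h
            · obtain ⟨p, hp, rfl⟩ := Finset.mem_image.mp h
              have hp2 := Finset.mem_filter.mp hp
              have hpt : p.1 ∈ t := (Finset.mem_product.mp hp2.1).1
              have := deg_sub_single p.1 p.2 hp2.2
              have := ht p.1 hpt
              omega
            · have := hu₂ γ h
              omega
          have hcc0 : ∀ γ ∈ u₁ ∪ u₂,
              ((if γ ∈ u₁ then hcoef γ else 0) + (if γ ∈ u₂ then -e γ else 0)) = 0 :=
            IH (u₁ ∪ u₂) _ hbound hcomb
          -- extract at γ = β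
          have hβu₁ : β ∈ u₁ := by
            rw [hu₁def]
            refine Finset.mem_image.mpr ⟨(α0, i0), ?_, rfl⟩
            rw [hs₂def]
            refine Finset.mem_filter.mpr ⟨Finset.mem_product.mpr ⟨hα0t, Finset.mem_univ i0⟩, hi0⟩
          have hβnu₂ : β ∉ u₂ := by
            intro h
            have := hu₂ β h
            omega
          have hcoefβ : hcoef β = 0 := by
            have h := hcc0 β (Finset.mem_union_left _ hβu₁)
            rw [if_pos hβu₁, if_neg hβnu₂, add_zero] at h
            exact h
          -- identify hcoef β with the cc-combination
          have hfiber : hcoef β = ∑ i ∈ Finset.univ.filter (fun i => β + Pi.single i 1 ∈ t),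
              c (β + Pi.single i 1) * (((β i + 1 : ℕ) : F) * d i b) := by
            rw [hcoefdef]
            refine Finset.sum_nbij' (fun p => p.2) (fun i => (β + Pi.single i 1, i))
              ?_ ?_ ?_ ?_ ?_
            · intro p hp
              have hp1 := Finset.mem_filter.mp hp
              have hp2 := Finset.mem_filter.mp hp1.1
              have hp3 : p.1 = β + Pi.single p.2 1 := by
                rw [← hp1.2]
                exact (sub_add_single p.1 p.2 hp2.2).symm
              refine Finset.mem_filter.mpr ⟨Finset.mem_univ _, ?_⟩
              rw [← hp3]
              exact (Finset.mem_product.mp hp2.1).1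
            · intro i hi
              have hit := (Finset.mem_filter.mp hi).2
              refine Finset.mem_filter.mpr ⟨Finset.mem_filter.mpr
                ⟨Finset.mem_product.mpr ⟨hit, Finset.mem_univ i⟩, by simp⟩, ?_⟩
              funext k
              by_cases hk : k = i
              · subst hk; simp
              · simp [Pi.single_eq_of_ne hk]
            · intro p hp
              have hp1 := Finset.mem_filter.mp hp
              have hp2 := Finset.mem_filter.mp hp1.1
              have hp3 : p.1 = β + Pi.single p.2 1 := by
                rw [← hp1.2]
                exact (sub_add_single p.1 p.2 hp2.2).symm
              exact Prod.ext hp3.symm rfl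
            · intro i hi; rfl
            · intro p hp
              have hp1 := Finset.mem_filter.mp hp
              have hp2 := Finset.mem_filter.mp hp1.1
              have hp3 : p.1 = β + Pi.single p.2 1 := by
                rw [← hp1.2]
                exact (sub_add_single p.1 p.2 hp2.2).symm
              have hp4 : p.1 p.2 = β p.2 + 1 := by rw [hp3]; simp
              rw [hp4, hp3]
          have hccsum : ∑ i, cc i * d i b = hcoef β := by
            rw [hfiber, Finset.sum_filter]
            refine Finset.sum_congr rfl fun i _ => ?_
            simp only [hccdef]
            by_cases hmem : β + Pi.single i 1 ∈ t
            · rw [if_pos hmem, if_pos hmem]; ring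
            · rw [if_neg hmem, if_neg hmem, zero_mul]
          rw [hccsum, hcoefβ]
        have hcc := hindep cc hcczero
        have hcc0 : cc i0 = 0 := congrFun hcc i0
        have hcc1 : cc i0 = c α0 * ((β i0 + 1 : ℕ) : F) := by
          rw [hccdef]
          simp only [hβα0]
          rw [if_pos hα0t]
        rw [hcc1] at hcc0
        rcases mul_eq_zero.mp hcc0 with h | h
        · exact h
        · exact absurd h (Nat.cast_ne_zero.mpr (Nat.succ_ne_zero _))
      -- remove the top, apply IH
      have hrel' : ∑ α ∈ t.filter (fun α => deg α ≤ N), c α • dpow d α = 0 := by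
        rw [← hrel]
        refine Finset.sum_subset (Finset.filter_subset _ _) fun α hα hnα => ?_
        have hd : deg α = N + 1 := by
          have := ht α hα
          have : ¬ deg α ≤ N := fun h => hnα (Finset.mem_filter.mpr ⟨hα, h⟩)
          omega
        rw [htop α hα hd, zero_smul]
      intro α hα
      by_cases hd : deg α ≤ N
      · exact IH _ c (fun γ hγ => (Finset.mem_filter.mp hγ).2) hrel' α
          (Finset.mem_filter.mpr ⟨hα, hd⟩)
      · exact htop α hα (by have := ht α hα; omega)

end withd
end DiffIndep
end Part3
section Part4

namespace DiffIndep

open MvPolynomial Polynomial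

variable {F : Type*} [Field F] [CharZero F]
variable {ι : Type*} [Fintype ι] [DecidableEq ι]

lemma eval_eval₂_line (g h : ι → F) (t : F) (P : MvPolynomial ι F) :
    Polynomial.eval t (MvPolynomial.eval₂ Polynomial.C
        (fun v => Polynomial.C (g v) + Polynomial.C (h v) * Polynomial.X) P)
      = MvPolynomial.eval (fun v => g v + h v * t) P := by
  have h1 := MvPolynomial.eval₂_comp_left (Polynomial.evalRingHom t) (Polynomial.C : F →+* F[X])
    (fun v => Polynomial.C (g v) + Polynomial.C (h v) * Polynomial.X) P
  simp only [Polynomial.coe_evalRingHom] at h1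
  rw [h1]
  have h2 : (Polynomial.evalRingHom t).comp (Polynomial.C : F →+* F[X]) = RingHom.id F := by
    ext a
    simp
  rw [h2]
  rw [MvPolynomial.eval₂_id]
  have h3 : (Polynomial.eval t ∘ fun v => Polynomial.C (g v) + Polynomial.C (h v) * Polynomial.X)
      = fun v => g v + h v * t := by
    funext v
    simp
  rw [h3]

lemma coeff_one_eval₂ (g h : ι → F) (P : MvPolynomial ι F) :
    (MvPolynomial.eval₂ Polynomial.C
        (fun v => Polynomial.C (g v) + Polynomial.C (h v) * Polynomial.X) P).coeff 1
      = ∑ v, h v * MvPolynomial.eval g (MvPolynomial.pderiv v P) := by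
  induction P using MvPolynomial.induction_on with
  | C a => simp [MvPolynomial.eval₂_C, Polynomial.coeff_C, MvPolynomial.pderiv_C]
  | add p q ihp ihq =>
      simp only [MvPolynomial.eval₂_add, Polynomial.coeff_add, ihp, ihq, map_add, mul_add]
      rw [← Finset.sum_add_distrib]
  | mul_X p w ih =>
      rw [MvPolynomial.eval₂_mul, MvPolynomial.eval₂_X]
      have hc : ∀ q : F[X], (q * (Polynomial.C (g w) + Polynomial.C (h w) * Polynomial.X)).coeff 1
          = q.coeff 1 * g w + q.coeff 0 * h w := by
        intro q
        rw [mul_add, Polynomial.coeff_add, Polynomial.coeff_mul_C, ← mul_assoc]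
        rw [show (1 : ℕ) = 0 + 1 from rfl, Polynomial.coeff_mul_X, Polynomial.coeff_mul_C]
      rw [hc, ih]
      have h0 : (MvPolynomial.eval₂ Polynomial.C
          (fun v => Polynomial.C (g v) + Polynomial.C (h v) * Polynomial.X) p).coeff 0
          = MvPolynomial.eval g p := by
        rw [Polynomial.coeff_zero_eq_eval_zero, eval_eval₂_line]
        have h4 : (fun v => g v + h v * 0) = g := by
          funext v
          ring
        rw [h4]
      rw [h0]
      have hR : ∀ v, MvPolynomial.eval g (MvPolynomial.pderiv v (p * MvPolynomial.X w))
          = MvPolynomial.eval g (MvPolynomial.pderiv v p) * g w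
            + (if v = w then MvPolynomial.eval g p else 0) := by
        intro v
        rw [MvPolynomial.pderiv_mul, map_add, map_mul, map_mul, MvPolynomial.eval_X]
        congr 1
        by_cases hv : v = w
        · subst hv
          rw [MvPolynomial.pderiv_X_self, if_pos rfl]
          simp
        · rw [MvPolynomial.pderiv_X_of_ne (fun hh => hv hh.symm), if_neg hv]
          simp
      have h5 : ∑ v, h v * MvPolynomial.eval g (MvPolynomial.pderiv v (p * MvPolynomial.X w))
          = ∑ v, (h v * (MvPolynomial.eval g (MvPolynomial.pderiv v p) * g w
              + if v = w then MvPolynomial.eval g p else 0)) :=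
        Finset.sum_congr rfl fun v _ => by rw [hR v]
      rw [h5]
      simp only [mul_add]
      rw [Finset.sum_add_distrib]
      congr 1
      · rw [Finset.sum_mul]
        exact Finset.sum_congr rfl fun v _ => by ring
      · simp only [mul_ite, mul_zero]
        rw [Finset.sum_ite_eq' Finset.univ w (fun v => h v * MvPolynomial.eval g p)]
        simp [mul_comm]

lemma finsupp_deg_sub_single {μ : ι →₀ ℕ} {v : ι} (h : μ v ≠ 0) :
    ((μ - Finsupp.single v 1).sum fun _ e => e) + 1 = μ.sum fun _ e => e := by
  have hadd : (μ - Finsupp.single v 1) + Finsupp.single v 1 = μ := by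
    ext k
    by_cases hk : k = v
    · subst hk
      simp only [Finsupp.add_apply, Finsupp.tsub_apply, Finsupp.single_eq_same]
      omega
    · simp [Finsupp.single_eq_of_ne' (fun hh => hk hh.symm)]
  conv_rhs => rw [← hadd]
  rw [Finsupp.sum_add_index' (fun _ => rfl) (fun _ _ _ => rfl)]
  rw [Finsupp.sum_single_index rfl]

lemma pderiv_totalDegree {P : MvPolynomial ι F} {v : ι} {n : ℕ} (h : P.totalDegree ≤ n + 1) :
    (MvPolynomial.pderiv v P).totalDegree ≤ n := by
  conv_lhs => rw [MvPolynomial.as_sum P]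
  rw [map_sum]
  refine le_trans (MvPolynomial.totalDegree_finset_sum _ _) ?_
  refine Finset.sup_le fun μ hμ => ?_
  rw [MvPolynomial.pderiv_monomial]
  by_cases h0 : μ v = 0
  · rw [h0]
    simp
  · refine le_trans (MvPolynomial.totalDegree_monomial_le _ _) ?_
    have h1 := finsupp_deg_sub_single (μ := μ) (v := v) h0
    have h2 : (μ.sum fun _ e => e) ≤ n + 1 := le_trans (MvPolynomial.le_totalDegree hμ) h
    have h3 : ((μ - Finsupp.single v 1).sum fun x => id) = ((μ - Finsupp.single v 1).sum fun _ e => e) := rfl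
    rw [h3]
    omega

lemma eq_C_of_totalDegree_eq_zero {P : MvPolynomial ι F} (h : P.totalDegree = 0) :
    P = MvPolynomial.C (MvPolynomial.coeff 0 P) := by
  ext μ
  rw [MvPolynomial.coeff_C]
  by_cases hμ : (0 : ι →₀ ℕ) = μ
  · rw [if_pos hμ, ← hμ]
  · rw [if_neg hμ]
    by_contra hc
    have hsup : μ ∈ P.support := MvPolynomial.mem_support_iff.mpr hc
    have hz := (MvPolynomial.totalDegree_eq_zero_iff ι P).mp h μ hsup
    exact hμ (Finsupp.ext fun k => (hz k).symm)

lemma pderiv_zero_totalDegree {P : MvPolynomial ι F} (h : ∀ v, MvPolynomial.pderiv v P = 0) :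
    P.totalDegree = 0 := by
  rw [MvPolynomial.totalDegree_eq_zero_iff]
  intro μ hμ v
  by_contra hv
  have hco : MvPolynomial.coeff (μ - Finsupp.single v 1) (MvPolynomial.pderiv v P)
      = MvPolynomial.coeff μ P * ((μ v : ℕ) : F) := by
    conv_lhs => rw [MvPolynomial.as_sum P, map_sum, MvPolynomial.coeff_sum]
    rw [Finset.sum_eq_single μ]
    · rw [MvPolynomial.pderiv_monomial, MvPolynomial.coeff_monomial, if_pos rfl]
    · intro τ hτ hne
      rw [MvPolynomial.pderiv_monomial, MvPolynomial.coeff_monomial]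
      by_cases h0 : τ v = 0
      · simp [h0]
      · rw [if_neg ?_]
        intro heq
        apply hne
        ext k
        have hk := Finsupp.ext_iff.mp heq k
        by_cases hkv : k = v
        · subst hkv
          simp only [Finsupp.tsub_apply, Finsupp.single_eq_same] at hk
          omega
        · simpa [Finsupp.single_eq_of_ne' (fun hh => hkv hh.symm)] using hk
    · intro hn
      exact absurd hμ hn
  rw [h v, MvPolynomial.coeff_zero] at hco
  have hcoeff : MvPolynomial.coeff μ P ≠ 0 := MvPolynomial.mem_support_iff.mp hμ
  have hcast : ((μ v : ℕ) : F) ≠ 0 := Nat.cast_ne_zero.mpr hv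
  exact hcast (by
    rcases mul_eq_zero.mp hco.symm with hh | hh
    · exact absurd hh hcoeff
    · exact hh)

/-- Artin-style lemma: a multivariate polynomial vanishing on the joint values of
linearly independent additive maps is zero. -/
lemma artin {V : Type*} [AddCommMonoid V] (f : ι → V → F)
    (hfadd : ∀ v x y, f v (x + y) = f v x + f v y)
    (hind : LinearIndependent F f) :
    ∀ (n : ℕ) (P : MvPolynomial ι F), P.totalDegree ≤ n →
      (∀ x, MvPolynomial.eval (fun v => f v x) P = 0) → P = 0 := by
  have hconst : ∀ P : MvPolynomial ι F, P.totalDegree = 0 →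
      (∀ x, MvPolynomial.eval (fun v => f v x) P = 0) → P = 0 := by
    intro P hdeg hvan
    have hC := eq_C_of_totalDegree_eq_zero hdeg
    have h0 := hvan 0
    rw [hC] at h0 ⊢
    rw [MvPolynomial.eval_C] at h0
    rw [h0, map_zero]
  intro n
  induction n with
  | zero =>
      intro P hdeg hvan
      exact hconst P (Nat.le_zero.mp hdeg) hvan
  | succ n ih =>
      intro P hdeg hvan
      have hf0 : ∀ v, f v 0 = 0 := fun v => by
        have := hfadd v 0 0
        simpa using this.symm
      have hfn : ∀ v (k : ℕ) (y : V), f v (k • y) = (k : F) * f v y := by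
        intro v k y
        induction k with
        | zero => simpa using hf0 v
        | succ k ihk =>
            rw [succ_nsmul, hfadd, ihk]
            push_cast
            ring
      have hpv : ∀ (v : ι) (x : V),
          MvPolynomial.eval (fun w => f w x) (MvPolynomial.pderiv v P) = 0 := by
        intro v x
        have key : ∀ y, ∑ w, f w y
            * MvPolynomial.eval (fun u => f u x) (MvPolynomial.pderiv w P) = 0 := by
          intro y
          have hq0 : MvPolynomial.eval₂ Polynomial.C
              (fun v => Polynomial.C (f v x) + Polynomial.C (f v y) * Polynomial.X) P = 0 := by
            apply Polynomial.eq_zero_of_infinite_isRoot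
            refine Set.Infinite.mono ?_
              (Set.infinite_range_of_injective (f := fun k : ℕ => (k : F)) Nat.cast_injective)
            rintro _ ⟨k, rfl⟩
            show Polynomial.IsRoot _ _
            unfold Polynomial.IsRoot
            rw [eval_eval₂_line]
            have harg : (fun v => f v x + f v y * (k : F)) = fun v => f v (x + k • y) := by
              funext v
              rw [hfadd, hfn]
              ring
            rw [harg]
            exact hvan _
          have hcoeff := congrArg (fun p : F[X] => p.coeff 1) hq0
          simp only [Polynomial.coeff_zero] at hcoeff
          rw [coeff_one_eval₂] at hcoeff
          exact hcoeff
        have hli := Fintype.linearIndependent_iff.mp hind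
          (fun w => MvPolynomial.eval (fun u => f u x) (MvPolynomial.pderiv w P))
        refine hli ?_ v
        funext y
        rw [Finset.sum_apply]
        simp only [Pi.smul_apply, smul_eq_mul, Pi.zero_apply]
        rw [← key y]
        exact Finset.sum_congr rfl fun w _ => by ring
      have hp0 : ∀ v, MvPolynomial.pderiv v P = 0 :=
        fun v => ih _ (pderiv_totalDegree hdeg) (hpv v)
      exact hconst P (pderiv_zero_totalDegree hp0) hvan

end DiffIndep
end Part4
section Part5

namespace DiffIndep

variable {F : Type*} [Field F] [CharZero F] {m : ℕ}

variable (d : Fin m → F → F)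
variable (hadd : ∀ i a b, d i (a + b) = d i a + d i b)
variable (hmul : ∀ i a b, d i (a * b) = d i a * b + a * d i b)
variable (hcomm : ∀ i j a, d i (d j a) = d j (d i a))

include hadd hmul hcomm in
lemma Glin (hindep : ∀ c : Fin m → F, (∀ a, ∑ i, c i * d i a = 0) → c = 0) (l : ℕ) :
    LinearIndependent F
      (fun (v : Fin l × (Fin m → ℕ)) => (fun a : Fin l → F => dpow d v.2 (a v.1))) := by
  classical
  rw [linearIndependent_iff']
  intro s g hsum v hv
  set i0 := v.1 with hi0
  set t := (s.filter (fun w => w.1 = i0)).image Prod.snd with htdef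
  have hkey : ∑ α ∈ t, g (i0, α) • dpow d α = 0 := by
    funext x
    rw [Finset.sum_apply]
    have h1 : ∑ α ∈ t, (g (i0, α) • dpow d α) x
        = ∑ w ∈ s.filter (fun w => w.1 = i0), g w * dpow d w.2 x := by
      rw [htdef, Finset.sum_image (fun w hw w' hw' hww =>
        Prod.ext (((Finset.mem_filter.mp hw).2).trans ((Finset.mem_filter.mp hw').2).symm) hww)]
      refine Finset.sum_congr rfl fun w hw => ?_
      have hw1 : w.1 = i0 := (Finset.mem_filter.mp hw).2
      rw [show ((i0 : Fin l), w.2) = w from Prod.ext hw1.symm rfl]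
      simp
    have h2 : ∑ w ∈ s.filter (fun w => w.1 = i0), g w * dpow d w.2 x
        = ∑ w ∈ s, g w * dpow d w.2 ((Pi.single i0 x : Fin l → F) w.1) := by
      rw [Finset.sum_filter]
      refine Finset.sum_congr rfl fun w _ => ?_
      by_cases hw1 : w.1 = i0
      · rw [if_pos hw1, hw1, Pi.single_eq_same]
      · rw [if_neg hw1, Pi.single_eq_of_ne hw1, dpow_zero_arg d hadd, mul_zero]
    have h3 : ∑ w ∈ s, g w * dpow d w.2 ((Pi.single i0 x : Fin l → F) w.1) = 0 := by
      have h4 := congrFun hsum (Pi.single i0 x)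
      simpa [Finset.sum_apply] using h4
    rw [h1, h2, h3]
    rfl
  have hall := lemA d hadd hmul hcomm hindep (t.sup deg) t (fun α => g (i0, α))
    (fun α hα => Finset.le_sup hα) hkey
  have hvt : v.2 ∈ t := Finset.mem_image.mpr ⟨v, Finset.mem_filter.mpr ⟨hv, rfl⟩, rfl⟩
  have hv2 := hall v.2 hvt
  simpa using hv2

end DiffIndep
end Part5

/-- For a differential field `(F,∂₁,…,∂ₘ)` of characteristic zero, the derivations
`∂₁,…,∂ₘ` are linearly independent over `F` iff there is no nonzero `∂`-differential
polynomial over `F` (in any finite number of differential indeterminates) vanishing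
at all values of the indeterminates from `F`. A differential polynomial in `l`
indeterminates is modelled as a polynomial in the variables `(i, α)`, standing for
`∂^α z_i`, evaluated at `a : Fin l → F` by `(i, α) ↦ ∂^α (a i)`. -/
theorem indep_iff_no_vanishing_diff_poly {F : Type*} [Field F] [CharZero F] {m : ℕ}
    (d : Fin m → F → F)
    (hadd : ∀ i a b, d i (a + b) = d i a + d i b)
    (hmul : ∀ i a b, d i (a * b) = d i a * b + a * d i b)
    (hcomm : ∀ i j a, d i (d j a) = d j (d i a)) :
    (∀ c : Fin m → F, (∀ a, ∑ i, c i * d i a = 0) → c = 0) ↔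
      (∀ (l : ℕ) (P : MvPolynomial (Fin l × (Fin m → ℕ)) F),
        (∀ a : Fin l → F,
          MvPolynomial.eval (fun v => dpow d v.2 (a v.1)) P = 0) → P = 0) := by
  classical
  have hds : ∀ (i : Fin m) (x : F), dpow d (Pi.single i 1) x = d i x := by
    intro i x
    have h := DiffIndep.dpow_step d hcomm i 0 x
    rw [zero_add] at h
    rw [h, DiffIndep.dpow_zero_idx]
    rfl
  constructor
  · intro hindep l P hvan
    obtain ⟨s, P', rfl⟩ := MvPolynomial.exists_finset_rename P
    rw [show P' = 0 from ?_, map_zero]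
    have hGs : LinearIndependent F
        (fun (v : {x // x ∈ s}) => (fun a : Fin l → F => dpow d v.1.2 (a v.1.1))) :=
      (DiffIndep.Glin d hadd hmul hcomm hindep l).comp Subtype.val Subtype.val_injective
    refine DiffIndep.artin (fun (v : {x // x ∈ s}) (a : Fin l → F) => dpow d v.1.2 (a v.1.1))
      ?_ hGs P'.totalDegree P' le_rfl ?_
    · intro v x y
      have h := DiffIndep.dpow_add d hadd v.1.2 (x v.1.1) (y v.1.1)
      simpa using h
    · intro x
      have h := hvan x
      rw [MvPolynomial.eval_rename] at h
      exact h
  · intro hP c hc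
    set P : MvPolynomial (Fin 1 × (Fin m → ℕ)) F :=
      ∑ i, MvPolynomial.C (c i) * MvPolynomial.X ((0 : Fin 1), Pi.single i 1) with hPdef
    have hvan : ∀ a : Fin 1 → F, MvPolynomial.eval (fun v => dpow d v.2 (a v.1)) P = 0 := by
      intro a
      rw [hPdef, map_sum]
      have h1 : ∀ i : Fin m, MvPolynomial.eval (fun v => dpow d v.2 (a v.1))
          (MvPolynomial.C (c i) * MvPolynomial.X ((0 : Fin 1), Pi.single i 1))
          = c i * d i (a 0) := by
        intro i
        rw [map_mul, MvPolynomial.eval_C, MvPolynomial.eval_X]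
        simp only
        rw [hds]
      rw [Finset.sum_congr rfl fun i _ => h1 i]
      exact hc (a 0)
    have hP0 := hP 1 P hvan
    funext i
    have hco := congrArg
      (MvPolynomial.coeff (Finsupp.single ((0 : Fin 1), Pi.single i 1) 1)) hP0
    rw [hPdef, MvPolynomial.coeff_sum] at hco
    simp only [MvPolynomial.coeff_C_mul, MvPolynomial.coeff_X', MvPolynomial.coeff_zero] at hco
    rw [Finset.sum_eq_single i] at hco
    · rw [if_pos rfl, mul_one] at hco
      exact hco
    · intro j _ hji
      rw [if_neg, mul_zero]
      intro hsingle
      have hpair := (Finsupp.single_left_inj (one_ne_zero)).mp hsingle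
      have hps : (Pi.single j 1 : Fin m → ℕ) = Pi.single i 1 := by
        have h9 := congrArg Prod.snd hpair
        exact h9
      have := congrFun hps j
      rw [Pi.single_eq_same, Pi.single_eq_of_ne' ?_] at this
      · exact absurd this one_ne_zero
      · exact hji.symm
    · intro hni
      exact absurd (Finset.mem_univ i) hni
end

section
/- Let (F,∂) be a differential field of characteristic zero with commuting derivations ∂_1,...,∂_m, and let a = (a_1,...,a_m), b = (b_1,...,b_m) be nonzero row vectors in F^m. Then there exists a differential field extension (F_1, ∂) of (F, ∂) and a matrix T ∈ GL^∂(m, F_1) such that aT = b. -/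
universe u v

set_option linter.unusedSectionVars false



namespace ATaux2

open MvPolynomial

variable {F : Type u} [Field F] {σ : Type v}

/-- coefficient-wise application of an additive map -/
noncomputable def cd (δ : F → F) (ha : ∀ x y, δ (x + y) = δ x + δ y) :
    MvPolynomial σ F →+ MvPolynomial σ F :=
  { toFun := AddMonoidAlgebra.map (AddMonoidHom.mk' δ ha)
    map_zero' := AddMonoidAlgebra.map_zero _
    map_add' := AddMonoidAlgebra.map_add _ }

lemma cd_monomial (δ : F → F) (ha) (s : σ →₀ ℕ) (c : F) :
    cd δ ha (monomial s c) = monomial s (δ c) := by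
  rw [← single_eq_monomial, ← single_eq_monomial]
  show AddMonoidAlgebra.map (AddMonoidHom.mk' δ ha) _ = _
  exact AddMonoidAlgebra.map_single _ _ _

lemma cd_mul (δ : F → F) (ha) (hm : ∀ x y, δ (x * y) = δ x * y + x * δ y)
    (p q : MvPolynomial σ F) :
    cd δ ha (p * q) = cd δ ha p * q + p * cd δ ha q := by
  induction p using MvPolynomial.induction_on' with
  | add p1 p2 ih1 ih2 =>
    rw [add_mul, map_add, ih1, ih2, map_add]
    ring
  | monomial u a =>
    induction q using MvPolynomial.induction_on' with
    | add q1 q2 ih1 ih2 =>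
      rw [mul_add, map_add, ih1, ih2, map_add]
      ring
    | monomial v b =>
      rw [monomial_mul, cd_monomial, cd_monomial, cd_monomial, hm, monomial_mul,
        monomial_mul]
      exact map_add (monomial (u + v)) _ _

/-- derivation-like map: coefficientwise `δ` plus `mkDerivation` with values `V` -/
noncomputable def DD (δ : F → F) (ha : ∀ x y, δ (x + y) = δ x + δ y)
    (V : σ → MvPolynomial σ F) : MvPolynomial σ F → MvPolynomial σ F :=
  fun p => cd δ ha p + MvPolynomial.mkDerivation F V p

lemma DD_add (δ : F → F) (ha) (V : σ → MvPolynomial σ F) (p q : MvPolynomial σ F) :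
    DD δ ha V (p + q) = DD δ ha V p + DD δ ha V q := by
  simp only [DD, map_add]; ring

lemma DD_mul (δ : F → F) (ha) (hm : ∀ x y, δ (x * y) = δ x * y + x * δ y) (V : σ → MvPolynomial σ F)
    (p q : MvPolynomial σ F) :
    DD δ ha V (p * q) = DD δ ha V p * q + p * DD δ ha V q := by
  simp only [DD]
  rw [cd_mul δ ha hm, Derivation.leibniz]
  simp only [smul_eq_mul]
  ring

lemma DD_C (δ : F → F) (ha) (hm : ∀ x y, δ (x * y) = δ x * y + x * δ y) (V : σ → MvPolynomial σ F) (c : F) :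
    DD δ ha V (C c) = C (δ c) := by
  have h1 : δ 1 = 0 := by
    have := hm 1 1
    simp only [mul_one, one_mul] at this
    exact left_eq_add.mp this
  simp only [DD]
  have h2 : MvPolynomial.mkDerivation F V (C c) = 0 := by
    rw [show (C c : MvPolynomial σ F) = algebraMap F _ c from rfl, Derivation.map_algebraMap]
  rw [h2, add_zero, ← monomial_zero', cd_monomial, monomial_zero']

lemma DD_X (δ : F → F) (ha) (hm : ∀ x y, δ (x * y) = δ x * y + x * δ y) (V : σ → MvPolynomial σ F) (s : σ) :
    DD δ ha V (X s) = V s := by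
  have h1 : δ 1 = 0 := by
    have := hm 1 1
    simp only [mul_one, one_mul] at this
    exact left_eq_add.mp this
  simp only [DD]
  rw [MvPolynomial.mkDerivation_X]
  have h2 : (X s : MvPolynomial σ F) = monomial (Finsupp.single s 1) 1 := rfl
  rw [h2, cd_monomial, h1, monomial_zero, zero_add]

/-- extensionality for derivation-like maps -/
lemma derivLike_ext (D D' : MvPolynomial σ F → MvPolynomial σ F)
    (hDa : ∀ p q, D (p + q) = D p + D q) (hDm : ∀ p q, D (p * q) = D p * q + p * D q)
    (hD'a : ∀ p q, D' (p + q) = D' p + D' q) (hD'm : ∀ p q, D' (p * q) = D' p * q + p * D' q)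
    (hC : ∀ c, D (C c) = D' (C c)) (hX : ∀ s, D (X s) = D' (X s)) (p : MvPolynomial σ F) :
    D p = D' p := by
  induction p using MvPolynomial.induction_on with
  | C c => exact hC c
  | add p q ih1 ih2 => rw [hDa, hD'a, ih1, ih2]
  | mul_X p n ih => rw [hDm, hD'm, ih, hX]

end ATaux2



namespace ATaux

open scoped Classical

variable {R : Type u} [CommRing R] [IsDomain R]

local notation "K" => FractionRing R
local notation "φ" => algebraMap R (FractionRing R)

lemma exists_rep (x : K) : ∃ pq : R × R, pq.2 ≠ 0 ∧ x = φ pq.1 / φ pq.2 := by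
  obtain ⟨p, q, hq, h⟩ := IsFractionRing.div_surjective (A := R) x
  exact ⟨(p, q), mem_nonZeroDivisors_iff_ne_zero.mp hq, h.symm⟩

lemma map_ne_zero' {q : R} (hq : q ≠ 0) : φ q ≠ 0 := fun h =>
  hq <| IsFractionRing.injective R K (by rw [h, map_zero])

/-- extension of a derivation-like map to the fraction field -/
noncomputable def extD (D : R → R) (x : K) : K :=
  (φ (D (exists_rep x).choose.1) * φ (exists_rep x).choose.2
    - φ (exists_rep x).choose.1 * φ (D (exists_rep x).choose.2)) / φ (exists_rep x).choose.2 ^ 2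

section

variable {D : R → R} (hDm : ∀ x y, D (x * y) = D x * y + x * D y)

include hDm

lemma extD_spec (p q : R) (hq : q ≠ 0) :
    extD D (φ p / φ q) = (φ (D p) * φ q - φ p * φ (D q)) / φ q ^ 2 := by
  obtain ⟨h2, h1⟩ := (exists_rep (R := R) (φ p / φ q)).choose_spec
  set p' := (exists_rep (R := R) (φ p / φ q)).choose.1
  set q' := (exists_rep (R := R) (φ p / φ q)).choose.2
  have hq0 : φ q ≠ 0 := map_ne_zero' hq
  have hq'0 : φ q' ≠ 0 := map_ne_zero' h2
  have hA : p * q' = p' * q := by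
    apply IsFractionRing.injective R K
    rw [map_mul, map_mul]
    field_simp at h1
    exact h1.trans (mul_comm _ _)
  have hB : D p * q' + p * D q' = D p' * q + p' * D q := by
    have := congrArg D hA
    rwa [hDm, hDm] at this
  rw [extD]
  rw [div_eq_div_iff (pow_ne_zero 2 hq'0) (pow_ne_zero 2 hq0)]
  have key : (D p' * q' - p' * D q') * q ^ 2 = (D p * q - p * D q) * q' ^ 2 := by
    linear_combination (D q' * q + D q * q') * hA - (q * q') * hB
  calc (φ (D p') * φ q' - φ p' * φ (D q')) * φ q ^ 2
      = φ ((D p' * q' - p' * D q') * q ^ 2) := by push_cast [map_mul, map_sub, map_pow]; ring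
    _ = φ ((D p * q - p * D q) * q' ^ 2) := by rw [key]
    _ = (φ (D p) * φ q - φ p * φ (D q)) * φ q' ^ 2 := by
        push_cast [map_mul, map_sub, map_pow]; ring

lemma D_one : D 1 = 0 := by
  have := hDm 1 1
  simp only [mul_one, one_mul] at this
  exact left_eq_add.mp this

lemma extD_map (p : R) : extD D (φ p) = φ (D p) := by
  have h : φ p = φ p / φ (1 : R) := by simp
  rw [h, extD_spec hDm p 1 one_ne_zero]
  simp [D_one hDm]

end

section
set_option linter.unusedSectionVars false

variable {D D' : R → R}
  (hDa : ∀ x y, D (x + y) = D x + D y) (hDm : ∀ x y, D (x * y) = D x * y + x * D y)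

include hDa

lemma D_zero : D 0 = 0 := by
  have := hDa 0 0
  simp only [add_zero] at this
  exact left_eq_add.mp this

lemma D_sub (x y : R) : D (x - y) = D x - D y := by
  have h := hDa (x - y) y
  rw [sub_add_cancel] at h
  rw [eq_sub_iff_add_eq, ← h]

include hDm

lemma extD_add (x y : K) : extD D (x + y) = extD D x + extD D y := by
  obtain ⟨⟨p, q⟩, hq, hx⟩ := exists_rep x
  obtain ⟨⟨p', q'⟩, hq', hy⟩ := exists_rep y
  subst hx; subst hy
  have hq0 : φ q ≠ 0 := map_ne_zero' hq
  have hq'0 : φ q' ≠ 0 := map_ne_zero' hq'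
  have hsum : φ p / φ q + φ p' / φ q' = φ (p * q' + p' * q) / φ (q * q') := by
    rw [div_add_div _ _ hq0 hq'0, map_add, map_mul, map_mul, map_mul]
    ring_nf
  rw [hsum, extD_spec hDm _ _ (mul_ne_zero hq hq'), extD_spec hDm p q hq,
    extD_spec hDm p' q' hq']
  have e1 : D (p * q' + p' * q) = D p * q' + p * D q' + (D p' * q + p' * D q) := by
    rw [hDa, hDm, hDm]
  have e2 : D (q * q') = D q * q' + q * D q' := hDm q q'
  rw [e1, e2]
  push_cast [map_add, map_mul]
  field_simp
  ring

lemma extD_mul (x y : K) : extD D (x * y) = extD D x * y + x * extD D y := by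
  obtain ⟨⟨p, q⟩, hq, hx⟩ := exists_rep x
  obtain ⟨⟨p', q'⟩, hq', hy⟩ := exists_rep y
  subst hx; subst hy
  have hq0 : φ q ≠ 0 := map_ne_zero' hq
  have hq'0 : φ q' ≠ 0 := map_ne_zero' hq'
  have hprod : φ p / φ q * (φ p' / φ q') = φ (p * p') / φ (q * q') := by
    rw [map_mul, map_mul]; field_simp
  rw [hprod, extD_spec hDm _ _ (mul_ne_zero hq hq'), extD_spec hDm p q hq,
    extD_spec hDm p' q' hq']
  rw [hDm p p', hDm q q']
  push_cast [map_add, map_mul]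
  field_simp
  ring

lemma extD_comm
    (hD'a : ∀ x y, D' (x + y) = D' x + D' y) (hD'm : ∀ x y, D' (x * y) = D' x * y + x * D' y)
    (hc : ∀ r, D (D' r) = D' (D r)) (x : K) :
    extD D (extD D' x) = extD D' (extD D x) := by
  obtain ⟨⟨p, q⟩, hq, hx⟩ := exists_rep x
  subst hx
  have hq0 : φ q ≠ 0 := map_ne_zero' hq
  have hq2 : q ^ 2 ≠ 0 := pow_ne_zero 2 hq
  rw [extD_spec hD'm p q hq, extD_spec hDm p q hq]
  have h1 : (φ (D' p) * φ q - φ p * φ (D' q)) / φ q ^ 2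
      = φ (D' p * q - p * D' q) / φ (q ^ 2) := by
    push_cast [map_mul, map_sub, map_pow]; ring
  have h2 : (φ (D p) * φ q - φ p * φ (D q)) / φ q ^ 2
      = φ (D p * q - p * D q) / φ (q ^ 2) := by
    push_cast [map_mul, map_sub, map_pow]; ring
  rw [h1, h2, extD_spec hDm _ _ hq2, extD_spec hD'm _ _ hq2]
  have key : D (D' p * q - p * D' q) * q ^ 2 - (D' p * q - p * D' q) * D (q ^ 2)
      = D' (D p * q - p * D q) * q ^ 2 - (D p * q - p * D q) * D' (q ^ 2) := by
    have hq2' : (q : R) ^ 2 = q * q := sq q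
    rw [D_sub hDa, D_sub hD'a, hDm, hDm, hD'm, hD'm, hq2', hDm, hD'm,
      hc p, hc q]
    ring
  calc (φ (D (D' p * q - p * D' q)) * φ (q ^ 2)
        - φ (D' p * q - p * D' q) * φ (D (q ^ 2))) / φ (q ^ 2) ^ 2
      = φ (D (D' p * q - p * D' q) * q ^ 2 - (D' p * q - p * D' q) * D (q ^ 2))
          / φ (q ^ 2) ^ 2 := by push_cast [map_mul, map_sub]; ring
    _ = φ (D' (D p * q - p * D q) * q ^ 2 - (D p * q - p * D q) * D' (q ^ 2))
          / φ (q ^ 2) ^ 2 := by rw [key]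
    _ = _ := by push_cast [map_mul, map_sub]; ring

end

end ATaux



namespace ATaux3

/-! ### Iterated application of a finite family of commuting operators -/

variable {α : Type v} {R : Type u}

def pfold (Dn : α → R → R) (β : α →₀ ℕ) (L : List α) : R → R :=
  L.foldr (fun i f => (Dn i)^[β i] ∘ f) id

lemma pfold_nil (Dn : α → R → R) (β : α →₀ ℕ) : pfold Dn β [] = id := rfl

lemma pfold_cons (Dn : α → R → R) (β : α →₀ ℕ) (x : α) (xs : List α) :
    pfold Dn β (x :: xs) = (Dn x)^[β x] ∘ pfold Dn β xs := rfl

lemma pfold_congr {Dn : α → R → R} {β β' : α →₀ ℕ} :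
    ∀ {L : List α}, (∀ l ∈ L, β l = β' l) → pfold Dn β L = pfold Dn β' L := by
  intro L
  induction L with
  | nil => intro _; rfl
  | cons x xs ih =>
    intro h
    rw [pfold_cons, pfold_cons, h x (by simp), ih fun l hl => h l (by simp [hl])]

lemma pfold_zero {Dn : α → R → R} : ∀ (L : List α), pfold Dn (0 : α →₀ ℕ) L = id := by
  intro L
  induction L with
  | nil => rfl
  | cons x xs ih =>
    rw [pfold_cons, ih]
    simp

lemma pfold_pull [DecidableEq α] {Dn : α → R → R}
    (hc : ∀ i l r, Dn i (Dn l r) = Dn l (Dn i r)) {i : α} {β : α →₀ ℕ} :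
    ∀ {L : List α}, i ∈ L → L.Nodup →
      pfold Dn (β + Finsupp.single i 1) L = Dn i ∘ pfold Dn β L := by
  intro L
  induction L with
  | nil => intro h; cases h
  | cons x xs ih =>
    intro hmem hnd
    rcases List.nodup_cons.mp hnd with ⟨hx, hnd'⟩
    by_cases hxi : x = i
    · subst hxi
      have hnotin : ∀ l ∈ xs, (β + Finsupp.single x 1 : α →₀ ℕ) l = β l := by
        intro l hl
        rw [Finsupp.add_apply, Finsupp.single_apply,
          if_neg (by rintro rfl; exact hx hl), add_zero]
      rw [pfold_cons, pfold_cons, pfold_congr hnotin, Finsupp.add_apply,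
        Finsupp.single_eq_same, Function.iterate_succ']
      rfl
    · have hmem' : i ∈ xs := by
        rcases List.mem_cons.mp hmem with h | h
        · exact absurd h.symm hxi
        · exact h
      have hxx : (β + Finsupp.single i 1 : α →₀ ℕ) x = β x := by
        rw [Finsupp.add_apply, Finsupp.single_apply, if_neg (fun h => hxi h.symm), add_zero]
      funext r
      rw [pfold_cons, pfold_cons]
      show (Dn x)^[(β + Finsupp.single i 1 : α →₀ ℕ) x] (pfold Dn (β + Finsupp.single i 1) xs r)
        = Dn i ((Dn x)^[β x] (pfold Dn β xs r))
      rw [hxx, ih hmem' hnd']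
      show (Dn x)^[β x] (Dn i (pfold Dn β xs r)) = _
      exact ((Function.Commute.iterate_right (fun y => hc i x y) (β x)) _).symm

noncomputable def pder [Fintype α] [DecidableEq α] (Dn : α → R → R) (β : α →₀ ℕ) : R → R :=
  pfold Dn β Finset.univ.toList

lemma pder_zero [Fintype α] [DecidableEq α] {Dn : α → R → R} : pder Dn (0 : α →₀ ℕ) = id :=
  pfold_zero _

lemma pder_single_add [Fintype α] [DecidableEq α] {Dn : α → R → R}
    (hc : ∀ i l r, Dn i (Dn l r) = Dn l (Dn i r)) (i : α) (β : α →₀ ℕ) :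
    pder Dn (β + Finsupp.single i 1) = Dn i ∘ pder Dn β :=
  pfold_pull hc (Finset.mem_toList.mpr (Finset.mem_univ i)) (Finset.nodup_toList _)

end ATaux3

namespace ATmain

open MvPolynomial ATaux ATaux2 ATaux3

open scoped Classical

variable {F : Type u} [Field F] {m : ℕ}

/-- the index type of "free directions" -/
abbrev Jt (m : ℕ) (j₀ : Fin m) : Type := {j : Fin m // j ≠ j₀}

/-- variables: one family of variables for each `k : Fin m`, indexed by multi-indices in the
free directions -/
abbrev σt (m : ℕ) (j₀ : Fin m) : Type := Fin m × (Jt m j₀ →₀ ℕ)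

variable (F) in
abbrev Rt (m : ℕ) (j₀ : Fin m) : Type u := MvPolynomial (σt m j₀) F

section defs

variable (d : Fin m → F → F) (hadd : ∀ i x y, d i (x + y) = d i x + d i y)
  (a b : Fin m → F) (j₀ : Fin m)

/-- the derivations in the free directions -/
noncomputable def Dne (i : Jt m j₀) : Rt F m j₀ → Rt F m j₀ :=
  ATaux2.DD (d i) (hadd i) (fun s => X (s.1, s.2 + Finsupp.single i 1))

/-- the row `j₀` of the matrix -/
noncomputable def Gk (k : Fin m) : Rt F m j₀ :=
  C (b k / a j₀) - ∑ j : Jt m j₀, C ((a j : F) / a j₀) * X (k, Finsupp.single j 1)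

/-- the derivation in direction `j₀` -/
noncomputable def Dj0 : Rt F m j₀ → Rt F m j₀ :=
  ATaux2.DD (d j₀) (hadd j₀)
    (fun s => pder (Dne d hadd j₀) s.2 (Gk a b j₀ s.1))

/-- the full family of derivations -/
noncomputable def Dfull (i : Fin m) : Rt F m j₀ → Rt F m j₀ :=
  if h : i = j₀ then Dj0 d hadd a b j₀ else Dne d hadd j₀ ⟨i, h⟩

/-- the matrix -/
noncomputable def TR : Matrix (Fin m) (Fin m) (Rt F m j₀) :=
  fun j k => if h : j = j₀ then Gk a b j₀ k else X (k, Finsupp.single (⟨j, h⟩ : Jt m j₀) 1)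

end defs

section lemmas

variable {d : Fin m → F → F} {hadd : ∀ i x y, d i (x + y) = d i x + d i y}
  (hmul : ∀ i x y, d i (x * y) = d i x * y + x * d i y)
  (hcomm : ∀ i j x, d i (d j x) = d j (d i x))
  {a b : Fin m → F} {j₀ : Fin m}

lemma Dne_add (i : Jt m j₀) (p q : Rt F m j₀) :
    Dne d hadd j₀ i (p + q) = Dne d hadd j₀ i p + Dne d hadd j₀ i q :=
  DD_add _ _ _ _ _

include hmul in
lemma Dne_mul (i : Jt m j₀) (p q : Rt F m j₀) :
    Dne d hadd j₀ i (p * q) = Dne d hadd j₀ i p * q + p * Dne d hadd j₀ i q :=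
  DD_mul _ _ (hmul i) _ _ _

include hmul in
lemma Dne_C (i : Jt m j₀) (c : F) :
    Dne d hadd j₀ i (C c) = C (d i c) :=
  DD_C _ _ (hmul i) _ _

include hmul in
lemma Dne_X (i : Jt m j₀) (s : σt m j₀) :
    Dne d hadd j₀ i (X s) = X (s.1, s.2 + Finsupp.single i 1) :=
  DD_X _ _ (hmul i) _ _

/-- commutation of two arbitrary derivation-like maps can be checked on `C` and `X` -/
lemma comm_ext {σ : Type v} (D D' : MvPolynomial σ F → MvPolynomial σ F)
    (hDa : ∀ p q, D (p + q) = D p + D q) (hDm : ∀ p q, D (p * q) = D p * q + p * D q)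
    (hD'a : ∀ p q, D' (p + q) = D' p + D' q) (hD'm : ∀ p q, D' (p * q) = D' p * q + p * D' q)
    (hC : ∀ c, D (D' (C c)) = D' (D (C c))) (hX : ∀ s, D (D' (X s)) = D' (D (X s)))
    (p : MvPolynomial σ F) : D (D' p) = D' (D p) := by
  induction p using MvPolynomial.induction_on with
  | C c => exact hC c
  | add p q ih1 ih2 => rw [hDa, hD'a, hDa, hD'a, ih1, ih2]
  | mul_X p n ih =>
    rw [hD'm p (X n), hDa, hDm, hDm, hDm p (X n), hD'a, hD'm, hD'm, ih, hX]
    ring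

include hmul hcomm in
lemma Dne_comm (i l : Jt m j₀) (r : Rt F m j₀) :
    Dne d hadd j₀ i (Dne d hadd j₀ l r) = Dne d hadd j₀ l (Dne d hadd j₀ i r) := by
  refine comm_ext _ _ (Dne_add i) (Dne_mul hmul i) (Dne_add l) (Dne_mul hmul l) ?_ ?_ r
  · intro c
    rw [Dne_C hmul, Dne_C hmul, Dne_C hmul, Dne_C hmul, hcomm]
  · intro s
    rw [Dne_X hmul, Dne_X hmul, Dne_X hmul, Dne_X hmul]
    show X (s.1, s.2 + Finsupp.single l 1 + Finsupp.single i 1)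
      = X (s.1, s.2 + Finsupp.single i 1 + Finsupp.single l 1)
    rw [add_right_comm]

include hmul in
lemma Dj0_X (s : σt m j₀) :
    Dj0 d hadd a b j₀ (X s) = pder (Dne d hadd j₀) s.2 (Gk a b j₀ s.1) :=
  DD_X _ _ (hmul j₀) _ _

include hmul in
lemma Dj0_C (c : F) : Dj0 d hadd a b j₀ (C c) = C (d j₀ c) :=
  DD_C _ _ (hmul j₀) _ _

lemma Dfull_add (i : Fin m) (p q : Rt F m j₀) :
    Dfull d hadd a b j₀ i (p + q) = Dfull d hadd a b j₀ i p + Dfull d hadd a b j₀ i q := by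
  by_cases h : i = j₀ <;> simp only [Dfull, dif_pos, dif_neg, h] <;> exact DD_add _ _ _ _ _

include hmul in
lemma Dfull_mul (i : Fin m) (p q : Rt F m j₀) :
    Dfull d hadd a b j₀ i (p * q)
      = Dfull d hadd a b j₀ i p * q + p * Dfull d hadd a b j₀ i q := by
  by_cases h : i = j₀ <;> simp only [Dfull, dif_pos, dif_neg, h] <;>
    exact DD_mul _ _ (hmul _) _ _ _

include hmul in
lemma Dfull_C (i : Fin m) (c : F) :
    Dfull d hadd a b j₀ i (C c) = C (d i c) := by
  by_cases h : i = j₀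
  · subst h; simp only [Dfull, dif_pos]; exact Dj0_C hmul c
  · simp only [Dfull, dif_neg h]; exact Dne_C hmul _ _


lemma Dfull_j0 : Dfull d hadd a b j₀ j₀ = Dj0 d hadd a b j₀ := dif_pos rfl

lemma Dfull_ne {i : Fin m} (h : ¬ i = j₀) :
    Dfull d hadd a b j₀ i = Dne d hadd j₀ ⟨i, h⟩ := dif_neg h

lemma TR_j0 (k : Fin m) : TR a b j₀ j₀ k = Gk a b j₀ k := dif_pos rfl

lemma TR_ne {j : Fin m} (h : ¬ j = j₀) (k : Fin m) :
    TR a b j₀ j k = X (k, Finsupp.single (⟨j, h⟩ : Jt m j₀) 1) := dif_neg h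

include hmul hcomm in
lemma Dfull_comm (i l : Fin m) (r : Rt F m j₀) :
    Dfull d hadd a b j₀ i (Dfull d hadd a b j₀ l r)
      = Dfull d hadd a b j₀ l (Dfull d hadd a b j₀ i r) := by
  refine comm_ext _ _ (Dfull_add i) (Dfull_mul hmul i) (Dfull_add l) (Dfull_mul hmul l) ?_ ?_ r
  · intro c
    rw [Dfull_C hmul, Dfull_C hmul, Dfull_C hmul, Dfull_C hmul, hcomm]
  · intro s
    by_cases h1 : i = j₀ <;> by_cases h2 : l = j₀
    · rw [h1, h2]
    · -- i = j₀, l ≠ j₀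
      subst h1
      rw [Dfull_j0, Dfull_ne h2]
      rw [Dne_X hmul, Dj0_X hmul, Dj0_X hmul]
      show pder (Dne d hadd i) (s.2 + Finsupp.single (⟨l, h2⟩ : Jt m i) 1) (Gk a b i s.1)
        = Dne d hadd i ⟨l, h2⟩ (pder (Dne d hadd i) s.2 (Gk a b i s.1))
      rw [pder_single_add (Dne_comm hmul hcomm) (⟨l, h2⟩ : Jt m i) s.2]
      rfl
    · -- l = j₀, i ≠ j₀
      subst h2
      rw [Dfull_j0, Dfull_ne h1]
      rw [Dne_X hmul, Dj0_X hmul, Dj0_X hmul]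
      show Dne d hadd l ⟨i, h1⟩ (pder (Dne d hadd l) s.2 (Gk a b l s.1))
        = pder (Dne d hadd l) (s.2 + Finsupp.single (⟨i, h1⟩ : Jt m l) 1) (Gk a b l s.1)
      rw [pder_single_add (Dne_comm hmul hcomm) (⟨i, h1⟩ : Jt m l) s.2]
      rfl
    · rw [Dfull_ne h1, Dfull_ne h2]
      rw [Dne_X hmul, Dne_X hmul, Dne_X hmul, Dne_X hmul]
      show X (s.1, s.2 + Finsupp.single (⟨l, h2⟩ : Jt m j₀) 1 + Finsupp.single (⟨i, h1⟩ : Jt m j₀) 1)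
        = X (s.1, s.2 + Finsupp.single (⟨i, h1⟩ : Jt m j₀) 1 + Finsupp.single (⟨l, h2⟩ : Jt m j₀) 1)
      rw [add_right_comm]

include hmul hcomm in
lemma TR_symm (i j k : Fin m) :
    Dfull d hadd a b j₀ i (TR a b j₀ j k) = Dfull d hadd a b j₀ j (TR a b j₀ i k) := by
  by_cases h1 : i = j₀ <;> by_cases h2 : j = j₀
  · rw [h1, h2]
  · -- i = j₀, j ≠ j₀
    subst h1
    rw [Dfull_j0, Dfull_ne h2, TR_j0, TR_ne h2]
    rw [Dj0_X hmul]
    show pder (Dne d hadd i) (Finsupp.single (⟨j, h2⟩ : Jt m i) 1) (Gk a b i k)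
      = Dne d hadd i ⟨j, h2⟩ (Gk a b i k)
    rw [show (Finsupp.single (⟨j, h2⟩ : Jt m i) 1 : Jt m i →₀ ℕ)
        = 0 + Finsupp.single (⟨j, h2⟩ : Jt m i) 1 by rw [zero_add],
      pder_single_add (Dne_comm hmul hcomm), pder_zero]
    rfl
  · -- j = j₀, i ≠ j₀
    subst h2
    rw [Dfull_j0, Dfull_ne h1, TR_j0, TR_ne h1]
    rw [Dj0_X hmul]
    show Dne d hadd j ⟨i, h1⟩ (Gk a b j k)
      = pder (Dne d hadd j) (Finsupp.single (⟨i, h1⟩ : Jt m j) 1) (Gk a b j k)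
    rw [show (Finsupp.single (⟨i, h1⟩ : Jt m j) 1 : Jt m j →₀ ℕ)
        = 0 + Finsupp.single (⟨i, h1⟩ : Jt m j) 1 by rw [zero_add],
      pder_single_add (Dne_comm hmul hcomm), pder_zero]
    rfl
  · rw [Dfull_ne h1, Dfull_ne h2, TR_ne h1, TR_ne h2]
    rw [Dne_X hmul, Dne_X hmul]
    show X (k, Finsupp.single (⟨j, h2⟩ : Jt m j₀) 1 + Finsupp.single (⟨i, h1⟩ : Jt m j₀) 1)
      = X (k, Finsupp.single (⟨i, h1⟩ : Jt m j₀) 1 + Finsupp.single (⟨j, h2⟩ : Jt m j₀) 1)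
    rw [add_comm]

lemma TR_row (ha0 : a j₀ ≠ 0) (k : Fin m) :
    ∑ j, C (a j) * TR a b j₀ j k = (C (b k) : Rt F m j₀) := by
  rw [← Finset.add_sum_erase Finset.univ _ (Finset.mem_univ j₀), TR_j0]
  have h1 : ∑ j ∈ Finset.univ.erase j₀, C (a j) * TR a b j₀ j k
      = ∑ j : Jt m j₀, C ((a j : F)) * X (k, Finsupp.single j 1) := by
    rw [Finset.sum_subtype (Finset.univ.erase j₀) (p := fun j => j ≠ j₀)
      (by intro x; simp [Finset.mem_erase]) (fun j => C (a j) * TR a b j₀ j k)]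
    refine Finset.sum_congr rfl fun j _ => ?_
    rw [TR_ne j.2]
  rw [h1]
  have h2 : (C (a j₀) : Rt F m j₀) * Gk a b j₀ k
      = C (b k) - ∑ j : Jt m j₀, C ((a j : F)) * X (k, Finsupp.single j 1) := by
    rw [Gk, mul_sub, Finset.mul_sum]
    refine congrArg₂ (· - ·) ?_ ?_
    · rw [← C_mul, mul_div_cancel₀ _ ha0]
    · refine Finset.sum_congr rfl fun j _ => ?_
      rw [← mul_assoc, ← C_mul, mul_div_cancel₀ _ ha0]
  rw [h2, sub_add_cancel]

end lemmas

section det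

variable {a b : Fin m → F} {j₀ k₀ : Fin m}

/-- the evaluation point witnessing that the determinant is nonzero -/
noncomputable def vals (e : Jt m j₀ ≃ {k : Fin m // k ≠ k₀}) : σt m j₀ → F :=
  fun s => if ∃ j : Jt m j₀, s.2 = Finsupp.single j 1 ∧ ((e j : Fin m)) = s.1 then 1 else 0

lemma vals_X (e : Jt m j₀ ≃ {k : Fin m // k ≠ k₀}) (k : Fin m) (j : Jt m j₀) :
    MvPolynomial.eval (vals e) (X (k, Finsupp.single j 1) : Rt F m j₀)
      = if (e j : Fin m) = k then 1 else 0 := by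
  rw [MvPolynomial.eval_X]
  unfold vals
  by_cases hek : (e j : Fin m) = k
  · rw [if_pos ⟨j, rfl, hek⟩, if_pos hek]
  · rw [if_neg, if_neg hek]
    rintro ⟨j', hj', hej'⟩
    have : j = j' := Finsupp.single_left_injective one_ne_zero hj'
    exact hek (this ▸ hej')

lemma det_TR_ne_zero (ha0 : a j₀ ≠ 0) (hb0 : b k₀ ≠ 0)
    (e : Jt m j₀ ≃ {k : Fin m // k ≠ k₀}) :
    (TR a b j₀ : Matrix (Fin m) (Fin m) (Rt F m j₀)).det ≠ 0 := by
  set ev := MvPolynomial.eval (vals (F := F) e) with hev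
  intro h0
  have hN : ((TR a b j₀).map ev).det = 0 := by
    have : (TR a b j₀).map ev = ev.mapMatrix (TR a b j₀) := rfl
    rw [this, ← RingHom.map_det, h0, map_zero]
  obtain ⟨v, hv, hMv⟩ := Matrix.exists_mulVec_eq_zero_iff.mpr hN
  have hrowmul : ∀ i : Fin m, ∑ k, ev (TR a b j₀ i k) * v k = 0 := by
    intro i
    have := congrFun hMv i
    simpa [Matrix.mulVec, dotProduct, Matrix.map_apply] using this
  have hrow : ∀ j : Jt m j₀, v (e j) = 0 := by
    intro j
    have h := hrowmul j
    have heq : ∀ k, ev (TR a b j₀ (j : Fin m) k) * v k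
        = (if (e j : Fin m) = k then 1 else 0) * v k := by
      intro k
      rw [TR_ne j.2]
      congr 1
      have : (⟨(j : Fin m), j.2⟩ : Jt m j₀) = j := rfl
      rw [this, hev, vals_X]
    rw [Finset.sum_congr rfl fun k _ => heq k] at h
    simpa [ite_mul] using h
  have hvk : ∀ k, k ≠ k₀ → v k = 0 := by
    intro k hk
    have := hrow (e.symm ⟨k, hk⟩)
    rwa [Equiv.apply_symm_apply] at this
  have hGk0 : ev (Gk a b j₀ k₀) = b k₀ / a j₀ := by
    rw [Gk, map_sub, MvPolynomial.eval_C, map_sum]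
    have : ∀ j : Jt m j₀, ev (C ((a j : F) / a j₀) * X (k₀, Finsupp.single j 1)) = 0 := by
      intro j
      rw [map_mul, hev, vals_X, if_neg (e j).2, mul_zero]
    rw [Finset.sum_congr rfl fun j _ => this j]
    simp
  have hj0 : v k₀ = 0 := by
    have h := hrowmul j₀
    rw [Finset.sum_eq_single k₀ (fun k _ hk => by rw [hvk k hk, mul_zero])
      (fun hk => absurd (Finset.mem_univ k₀) hk)] at h
    have : ev (TR a b j₀ j₀ k₀) = b k₀ / a j₀ := by rw [TR_j0, hGk0]
    rw [this] at h
    exact (mul_eq_zero.mp h).resolve_left (div_ne_zero hb0 ha0)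
  apply hv
  funext k
  by_cases hk : k = k₀
  · rw [hk]; exact hj0
  · exact hvk k hk

end det

end ATmain

/-- For nonzero row vectors `a, b ∈ Fᵐ` there is a differential field extension
`(F₁,∂)` of `(F,∂)` and a matrix `T ∈ GL^∂(m,F₁)` with `aT = b`. -/
theorem exists_extension_solving_aT_eq_b {F : Type u} [Field F] {m : ℕ}
    (d : Fin m → F → F)
    (hadd : ∀ i a b, d i (a + b) = d i a + d i b)
    (hmul : ∀ i a b, d i (a * b) = d i a * b + a * d i b)
    (hcomm : ∀ i j a, d i (d j a) = d j (d i a))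
    (a b : Fin m → F) (ha : a ≠ 0) (hb : b ≠ 0) :
    ∃ (F₁ : Type u) (_ : Field F₁) (ι : F →+* F₁) (d₁ : Fin m → F₁ → F₁),
      (∀ i x y, d₁ i (x + y) = d₁ i x + d₁ i y) ∧
      (∀ i x y, d₁ i (x * y) = d₁ i x * y + x * d₁ i y) ∧
      (∀ i j x, d₁ i (d₁ j x) = d₁ j (d₁ i x)) ∧
      (∀ i x, d₁ i (ι x) = ι (d i x)) ∧
      ∃ T : Matrix (Fin m) (Fin m) F₁, IsUnit T.det ∧
        (∀ i j k, d₁ i (T j k) = d₁ j (T i k)) ∧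
        (∀ k, ∑ j, ι (a j) * T j k = ι (b k)) := by
  classical
  obtain ⟨j₀, hj₀⟩ := Function.ne_iff.mp ha
  obtain ⟨k₀, hk₀⟩ := Function.ne_iff.mp hb
  simp only [Pi.zero_apply] at hj₀ hk₀
  have hcard : Fintype.card (ATmain.Jt m j₀) = Fintype.card {k : Fin m // k ≠ k₀} := by
    simp [Fintype.card_subtype_compl]
  let e : ATmain.Jt m j₀ ≃ {k : Fin m // k ≠ k₀} := Fintype.equivOfCardEq hcard
  set R := ATmain.Rt F m j₀ with hR
  set φ := algebraMap R (FractionRing R) with hφ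
  have hDa : ∀ i p q, ATmain.Dfull d hadd a b j₀ i (p + q)
      = ATmain.Dfull d hadd a b j₀ i p + ATmain.Dfull d hadd a b j₀ i q :=
    fun i => ATmain.Dfull_add i
  have hDm : ∀ i p q, ATmain.Dfull d hadd a b j₀ i (p * q)
      = ATmain.Dfull d hadd a b j₀ i p * q + p * ATmain.Dfull d hadd a b j₀ i q :=
    fun i => ATmain.Dfull_mul hmul i
  refine ⟨FractionRing R, inferInstance, φ.comp MvPolynomial.C,
    fun i => ATaux.extD (ATmain.Dfull d hadd a b j₀ i), ?_, ?_, ?_, ?_, ?_⟩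
  · intro i x y
    exact ATaux.extD_add (hDa i) (hDm i) x y
  · intro i x y
    exact ATaux.extD_mul (hDa i) (hDm i) x y
  · intro i j x
    exact ATaux.extD_comm (hDa i) (hDm i) (hDa j) (hDm j)
      (fun r => ATmain.Dfull_comm hmul hcomm i j r) x
  · intro i x
    show ATaux.extD _ (φ (MvPolynomial.C x)) = φ (MvPolynomial.C (d i x))
    rw [ATaux.extD_map (hDm i), ATmain.Dfull_C hmul i x]
  · refine ⟨(ATmain.TR a b j₀).map φ, ?_, ?_, ?_⟩
    · have h1 : (ATmain.TR a b j₀).map φ = φ.mapMatrix (ATmain.TR a b j₀) := rfl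
      rw [h1, ← RingHom.map_det]
      exact isUnit_iff_ne_zero.mpr
        (ATaux.map_ne_zero' (ATmain.det_TR_ne_zero hj₀ hk₀ e))
    · intro i j k
      show ATaux.extD _ (φ (ATmain.TR a b j₀ j k)) = ATaux.extD _ (φ (ATmain.TR a b j₀ i k))
      rw [ATaux.extD_map (hDm i), ATaux.extD_map (hDm j),
        ATmain.TR_symm hmul hcomm i j k]
    · intro k
      have h1 : ∀ j, (φ.comp MvPolynomial.C) (a j) * ((ATmain.TR a b j₀).map φ) j k
          = φ (MvPolynomial.C (a j) * ATmain.TR a b j₀ j k) := by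
        intro j
        rw [map_mul]
        rfl
      rw [Finset.sum_congr rfl fun j _ => h1 j, ← map_sum, ATmain.TR_row hj₀ k]
      rfl
end
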